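/- arXiv:1503.01818 — 3 statements merged into one kernel-verified Lean document; each statement's English description precedes it below -/
import Mathlib

section
/- Let q₁, q₂, q₃ > 0 be pairwise distinct with q₁ > q₂ and q₁ > q₃, and let 0 < β₂ < β₁ with β₁·q_j < φ'(0) for j = 1,2,3. Then E > 0, where E = x₃(z₁ − z₂) + x₁x₃(y₁ − y₂) + x₂(z₁ − z₃) + x₁x₂(y₁ − y₃) + x₁(z₃ − z₂) + (y₃ − y₂)(x₁x₂ + x₂x₃ − x₁x₃). -/
/-!
Write `wⱼ = yⱼ - zⱼ / xⱼ = (ψ(β₂qⱼ) - ψ(β₁qⱼ)) / ψ_β(β₂, qⱼ)`. A direct computation gives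

  `x₁ E = z₁ (x₂ - x₁)(x₁ - x₃) + x₁ (x₁ + x₃)(z₁ - z₂) + x₁ x₂ (x₁ + x₃)(y₁ - y₂)
          + (x₂ - x₁) x₁ x₃ (w₃ - w₁)`,

and every term has a sign. (A2) gives `x₁ < x₂` and `x₁ < x₃`. By (A4) the derivative of
`β ↦ ψ(βq₁) / ψ(βq₂)` is nonpositive, which at `β₂` and `β₁` reads `y₂ ≤ y₁` and `z₂ ≤ z₁`.
Since `ψ ≥ 0 > ψ'`, `z₁ ≤ 0`. Finally Cauchy's mean value theorem on `[β₂, β₁]` writes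
`(ψ(β₂q₁) - ψ(β₁q₁)) / (ψ(β₂q₃) - ψ(β₁q₃))` as a ratio `ψ_β(β, q₁) / ψ_β(β, q₃)` with `β > β₂`,
which by (A2) exceeds the same ratio at `β₂`; this is `w₁ < w₃`.
-/

open Set

theorem div_lt_div_iff_of_neg {a b c d : ℝ} (hb : b < 0) (hd : d < 0) :
    a / b < c / d ↔ a * d < c * b := by
  rw [← neg_div_neg_eq a, ← neg_div_neg_eq c, div_lt_div_iff₀ (neg_pos.2 hb) (neg_pos.2 hd),
    neg_mul_neg, neg_mul_neg]

theorem div_le_div_iff_of_neg {a b c d : ℝ} (hb : b < 0) (hd : d < 0) :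
    a / b ≤ c / d ↔ a * d ≤ c * b := by
  rw [← neg_div_neg_eq a, ← neg_div_neg_eq c, div_le_div_iff₀ (neg_pos.2 hb) (neg_pos.2 hd),
    neg_mul_neg, neg_mul_neg]

theorem div_sub_div_div_div_eq {a b P Q : ℝ} (hP : P ≠ 0) :
    b / Q - a / P / (Q / P) = (b - a) / Q := by
  rcases eq_or_ne Q 0 with rfl | hQ
  · simp
  · field_simp

theorem expr_pos_of_orderings {x₁ x₂ x₃ y₁ y₂ y₃ z₁ z₂ z₃ : ℝ} (hx₁ : 0 < x₁)
    (hx₁₂ : x₁ < x₂) (hx₁₃ : x₁ < x₃) (hy : y₂ ≤ y₁) (hz : z₂ ≤ z₁) (hz₁ : z₁ ≤ 0)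
    (hw : y₁ - z₁ / x₁ < y₃ - z₃ / x₃) :
    0 < x₃ * (z₁ - z₂) + x₁ * x₃ * (y₁ - y₂) + x₂ * (z₁ - z₃) +
      x₁ * x₂ * (y₁ - y₃) + x₁ * (z₃ - z₂) +
      (y₃ - y₂) * (x₁ * x₂ + x₂ * x₃ - x₁ * x₃) := by
  have hx₃ : 0 < x₃ := hx₁.trans hx₁₃
  have hw' : x₃ * (x₁ * y₁ - z₁) < x₁ * (x₃ * y₃ - z₃) := by
    rw [← mul_div_cancel_left₀ y₁ hx₁.ne', ← mul_div_cancel_left₀ y₃ hx₃.ne', ← sub_div,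
      ← sub_div, div_lt_div_iff₀ hx₁ hx₃] at hw
    linarith
  refine pos_of_mul_pos_right (a := x₁) ?_ hx₁.le
  have t₁ : 0 ≤ z₁ * (x₂ - x₁) * (x₁ - x₃) :=
    mul_nonneg_of_nonpos_of_nonpos (mul_nonpos_of_nonpos_of_nonneg hz₁ (by linarith))
      (by linarith)
  have t₂ : 0 ≤ x₁ * (x₁ + x₃) * (z₁ - z₂) := by
    have := sub_nonneg.2 hz
    positivity
  have t₃ : 0 ≤ x₁ * x₂ * (x₁ + x₃) * (y₁ - y₂) := by
    have := sub_nonneg.2 hy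
    have := hx₁.trans hx₁₂
    positivity
  have t₄ : 0 < (x₂ - x₁) * (x₁ * (x₃ * y₃ - z₃) - x₃ * (x₁ * y₁ - z₁)) :=
    mul_pos (sub_pos.2 hx₁₂) (sub_pos.2 hw')
  linear_combination t₁ + t₂ + t₃ + t₄

theorem mul_le_mul_of_antitoneOn_div {f g : ℝ → ℝ} {f' g' x : ℝ} {s : Set ℝ} (hs : IsOpen s)
    (hx : x ∈ s) (hanti : AntitoneOn (fun y => f y / g y) s) (hf : HasDerivAt f f' x)
    (hg : HasDerivAt g g' x) (hgx : g x ≠ 0) : f' * g x ≤ f x * g' := by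
  have hd := (hf.div hg hgx).hasDerivWithinAt.nonpos_of_antitoneOn (hs.preperfect x hx) hanti
  rw [div_le_iff₀ (sq_pos_iff.2 hgx), zero_mul] at hd
  linarith

theorem sub_div_lt_sub_div_of_deriv_ratio_lt {f g f' g' : ℝ → ℝ} {a b : ℝ} (hab : a < b)
    (hf : ∀ x ∈ Icc a b, HasDerivAt f (f' x) x) (hg : ∀ x ∈ Icc a b, HasDerivAt g (g' x) x)
    (hf' : ∀ x ∈ Ico a b, f' x < 0) (hg' : ∀ x ∈ Ico a b, g' x < 0)
    (hratio : ∀ x ∈ Ioo a b, f' a / g' a < f' x / g' x) :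
    (f a - f b) / f' a < (g a - g b) / g' a := by
  have hcont {h h' : ℝ → ℝ} (hh : ∀ x ∈ Icc a b, HasDerivAt h (h' x) x) :
      ContinuousOn h (Icc a b) := fun x hx => (hh x hx).continuousAt.continuousWithinAt
  obtain ⟨c, hc, hcauchy⟩ := exists_ratio_hasDerivAt_eq_ratio_slope f f' hab (hcont hf)
    (fun x hx => hf x (Ioo_subset_Icc_self hx)) g g' (hcont hg)
    (fun x hx => hg x (Ioo_subset_Icc_self hx))
  have hfab : f b < f a := by
    refine strictAntiOn_of_deriv_neg (convex_Icc a b) (hcont hf) (fun x hx => ?_)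
      (left_mem_Icc.2 hab.le) (right_mem_Icc.2 hab.le) hab
    rw [interior_Icc] at hx
    rw [(hf x (Ioo_subset_Icc_self hx)).deriv]
    exact hf' x (Ioo_subset_Ico_self hx)
  have ha : a ∈ Ico a b := left_mem_Ico.2 hab
  have hratio_c := hratio c hc
  rw [div_lt_div_iff_of_neg (hg' a ha) (hg' c (Ioo_subset_Ico_self hc))] at hratio_c
  rw [div_lt_div_iff_of_neg (hf' a ha) (hg' a ha)]
  have hcross : f' c * ((f a - f b) * g' a - (g a - g b) * f' a)
      = (f a - f b) * (f' c * g' a - f' a * g' c) := by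
    linear_combination f' a * hcauchy
  have hpos : 0 < f' c * ((f a - f b) * g' a - (g a - g b) * f' a) :=
    hcross ▸ mul_pos (sub_pos.2 hfab) (sub_pos.2 hratio_c)
  exact sub_neg.1 (neg_of_mul_pos_right hpos (hf' c (Ioo_subset_Ico_self hc)).le)

theorem psi_pos {φ ψ : ℝ → ℝ}
    (hψ : ∀ y : ℝ, 0 < y → y ≤ deriv φ 0 → 0 ≤ ψ y ∧ deriv φ (ψ y) = y)
    {y : ℝ} (hy : 0 < y) (hyc : y < deriv φ 0) : 0 < ψ y := by
  obtain ⟨hnonneg, hinv⟩ := hψ y hy hyc.le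
  refine hnonneg.lt_of_ne fun h => hyc.ne ?_
  rw [← hinv, ← h]

theorem mul_lt_of_le_of_le_of_mul_lt {β β₁ q p c : ℝ} (hβ : 0 < β) (hβ₁ : β ≤ β₁) (hq : 0 < q)
    (hqp : q ≤ p) (h : β₁ * p < c) : β * q < c :=
  (mul_le_mul hβ₁ hqp hq.le (hβ.trans_le hβ₁).le).trans_lt h

section Psi

variable {ψ : ℝ → ℝ} {c : ℝ}

theorem deriv_comp_mul_neg (hψ' : ∀ y : ℝ, 0 < y → y < c → deriv ψ y < 0) {β β₁ q p : ℝ}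
    (hβ : 0 < β) (hβ₁ : β ≤ β₁) (hq : 0 < q) (hqp : q ≤ p) (h : β₁ * p < c) :
    deriv ψ (β * q) < 0 :=
  hψ' _ (mul_pos hβ hq) (mul_lt_of_le_of_le_of_mul_lt hβ hβ₁ hq hqp h)

theorem hasDerivAt_comp_mul (hψ' : ∀ y : ℝ, 0 < y → y < c → deriv ψ y < 0) {β q : ℝ}
    (hβ : 0 < β) (hq : 0 < q) (hβq : β * q < c) :
    HasDerivAt (fun b => ψ (b * q)) (q * deriv ψ (β * q)) β :=
  (differentiableAt_of_deriv_ne_zero (hψ' _ (mul_pos hβ hq) hβq).ne).hasDerivAt.scomp β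
    (hasDerivAt_mul_const q)

theorem deriv_ratio_lt_of_lt
    (hA2 : ∀ p q : ℝ, 0 < q → q < p →
      StrictMonoOn (fun β => deriv ψ (β * p) / deriv ψ (β * q)) (Ioo 0 (c / p)))
    {p q β₁ β₂ : ℝ} (hq : 0 < q) (hqp : q < p) (hβ₂ : 0 < β₂) (hβ : β₂ < β₁)
    (hβ₁p : β₁ * p < c) :
    deriv ψ (β₂ * p) / deriv ψ (β₂ * q) < deriv ψ (β₁ * p) / deriv ψ (β₁ * q) := by
  have hp : 0 < p := hq.trans hqp
  have hβ₂p : β₂ * p < c := (mul_lt_mul_of_pos_right hβ hp).trans hβ₁p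
  exact hA2 p q hq hqp ⟨hβ₂, (lt_div_iff₀ hp).2 hβ₂p⟩
    ⟨hβ₂.trans hβ, (lt_div_iff₀ hp).2 hβ₁p⟩ hβ

theorem mul_deriv_ratio_lt_of_lt (hψ' : ∀ y : ℝ, 0 < y → y < c → deriv ψ y < 0)
    (hA2 : ∀ p q : ℝ, 0 < q → q < p →
      StrictMonoOn (fun β => deriv ψ (β * p) / deriv ψ (β * q)) (Ioo 0 (c / p)))
    {p q β₁ β₂ : ℝ} (hq : 0 < q) (hqp : q < p) (hβ₂ : 0 < β₂) (hβ : β₂ < β₁)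
    (hβ₁p : β₁ * p < c) :
    p * deriv ψ (β₂ * p) / (p * deriv ψ (β₁ * p))
      < q * deriv ψ (β₂ * q) / (q * deriv ψ (β₁ * q)) := by
  have hp : 0 < p := hq.trans hqp
  have hβ₁ : 0 < β₁ := hβ₂.trans hβ
  have h := deriv_ratio_lt_of_lt hA2 hq hqp hβ₂ hβ hβ₁p
  rw [div_lt_div_iff_of_neg (deriv_comp_mul_neg hψ' hβ₂ hβ.le hq hqp.le hβ₁p)
    (deriv_comp_mul_neg hψ' hβ₁ le_rfl hq hqp.le hβ₁p)] at h
  rw [mul_div_mul_left _ _ hp.ne', mul_div_mul_left _ _ hq.ne',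
    div_lt_div_iff_of_neg (deriv_comp_mul_neg hψ' hβ₁ le_rfl hp le_rfl hβ₁p)
      (deriv_comp_mul_neg hψ' hβ₁ le_rfl hq hqp.le hβ₁p)]
  linarith

theorem div_mul_deriv_le_of_lt (hψ' : ∀ y : ℝ, 0 < y → y < c → deriv ψ y < 0)
    (hψpos : ∀ y : ℝ, 0 < y → y < c → 0 < ψ y)
    (hA4 : ∀ p q : ℝ, 0 < q → q < p →
      StrictAntiOn (fun β => ψ (β * p) / ψ (β * q)) (Ioo 0 (c / p)))
    {p q β : ℝ} (hq : 0 < q) (hqp : q < p) (hβ : 0 < β) (hβp : β * p < c) :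
    ψ (β * q) / (q * deriv ψ (β * q)) ≤ ψ (β * p) / (p * deriv ψ (β * p)) := by
  have hp : 0 < p := hq.trans hqp
  have hβq : β * q < c := mul_lt_of_le_of_le_of_mul_lt hβ le_rfl hq hqp.le hβp
  have h := mul_le_mul_of_antitoneOn_div isOpen_Ioo ⟨hβ, (lt_div_iff₀ hp).2 hβp⟩
    (hA4 p q hq hqp).antitoneOn (hasDerivAt_comp_mul hψ' hβ hp hβp)
    (hasDerivAt_comp_mul hψ' hβ hq hβq) (hψpos _ (mul_pos hβ hq) hβq).ne'
  rw [div_le_div_iff_of_neg (mul_neg_of_pos_of_neg hq (hψ' _ (mul_pos hβ hq) hβq))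
    (mul_neg_of_pos_of_neg hp (hψ' _ (mul_pos hβ hp) hβp))]
  linarith

theorem sub_div_mul_deriv_lt_of_lt (hψ' : ∀ y : ℝ, 0 < y → y < c → deriv ψ y < 0)
    (hA2 : ∀ p q : ℝ, 0 < q → q < p →
      StrictMonoOn (fun β => deriv ψ (β * p) / deriv ψ (β * q)) (Ioo 0 (c / p)))
    {p q β₁ β₂ : ℝ} (hq : 0 < q) (hqp : q < p) (hβ₂ : 0 < β₂) (hβ : β₂ < β₁)
    (hβ₁p : β₁ * p < c) :
    (ψ (β₂ * p) - ψ (β₁ * p)) / (p * deriv ψ (β₂ * p))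
      < (ψ (β₂ * q) - ψ (β₁ * q)) / (q * deriv ψ (β₂ * q)) := by
  have hp : 0 < p := hq.trans hqp
  have hbound {β r : ℝ} (hβ : β ∈ Icc β₂ β₁) (hr : 0 < r) (hrp : r ≤ p) : β * r < c :=
    mul_lt_of_le_of_le_of_mul_lt (hβ₂.trans_le hβ.1) hβ.2 hr hrp hβ₁p
  refine sub_div_lt_sub_div_of_deriv_ratio_lt (f' := fun β => p * deriv ψ (β * p))
    (g' := fun β => q * deriv ψ (β * q)) hβ
    (fun β hβ' => hasDerivAt_comp_mul hψ' (hβ₂.trans_le hβ'.1) hp (hbound hβ' hp le_rfl))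
    (fun β hβ' => hasDerivAt_comp_mul hψ' (hβ₂.trans_le hβ'.1) hq (hbound hβ' hq hqp.le))
    (fun β hβ' => mul_neg_of_pos_of_neg hp
      (deriv_comp_mul_neg hψ' (hβ₂.trans_le hβ'.1) hβ'.2.le hp le_rfl hβ₁p))
    (fun β hβ' => mul_neg_of_pos_of_neg hq
      (deriv_comp_mul_neg hψ' (hβ₂.trans_le hβ'.1) hβ'.2.le hq hqp.le hβ₁p))
    (fun β hβ' => ?_)
  simp only [mul_div_mul_comm p]
  exact mul_lt_mul_of_pos_left (deriv_ratio_lt_of_lt hA2 hq hqp hβ₂ hβ'.1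
    (hbound (Ioo_subset_Icc_self hβ') hp le_rfl)) (div_pos hp hq)

end Psi

theorem stmt_15_general (φ ψ : ℝ → ℝ)
    (hψ : ∀ y : ℝ, 0 < y → y ≤ deriv φ 0 → 0 ≤ ψ y ∧ deriv φ (ψ y) = y)
    (hψ' : ∀ y : ℝ, 0 < y → y < deriv φ 0 → deriv ψ y < 0)
    (hA2 : ∀ p q : ℝ, 0 < q → q < p →
      StrictMonoOn (fun β => deriv ψ (β * p) / deriv ψ (β * q))
        (Set.Ioo 0 (deriv φ 0 / p)))
    (hA4 : ∀ p q : ℝ, 0 < q → q < p →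
      StrictAntiOn (fun β => ψ (β * p) / ψ (β * q))
        (Set.Ioo 0 (deriv φ 0 / p)))
    (q₁ q₂ q₃ β₁ β₂ : ℝ)
    (hq2 : 0 < q₂) (hq3 : 0 < q₃)
    (hq12 : q₂ < q₁) (hq13 : q₃ < q₁)
    (hβ2 : 0 < β₂) (hβ21 : β₂ < β₁)
    (hdom1 : β₁ * q₁ < deriv φ 0)
    (x₁ x₂ x₃ y₁ y₂ y₃ z₁ z₂ z₃ : ℝ)
    (hx₁ : x₁ = (q₁ * deriv ψ (β₂ * q₁)) / (q₁ * deriv ψ (β₁ * q₁)))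
    (hx₂ : x₂ = (q₂ * deriv ψ (β₂ * q₂)) / (q₂ * deriv ψ (β₁ * q₂)))
    (hx₃ : x₃ = (q₃ * deriv ψ (β₂ * q₃)) / (q₃ * deriv ψ (β₁ * q₃)))
    (hy₁ : y₁ = ψ (β₂ * q₁) / (q₁ * deriv ψ (β₂ * q₁)))
    (hy₂ : y₂ = ψ (β₂ * q₂) / (q₂ * deriv ψ (β₂ * q₂)))
    (hy₃ : y₃ = ψ (β₂ * q₃) / (q₃ * deriv ψ (β₂ * q₃)))
    (hz₁ : z₁ = ψ (β₁ * q₁) / (q₁ * deriv ψ (β₁ * q₁)))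
    (hz₂ : z₂ = ψ (β₁ * q₂) / (q₂ * deriv ψ (β₁ * q₂)))
    (hz₃ : z₃ = ψ (β₁ * q₃) / (q₃ * deriv ψ (β₁ * q₃))) :
    0 < x₃ * (z₁ - z₂) + x₁ * x₃ * (y₁ - y₂) + x₂ * (z₁ - z₃) +
      x₁ * x₂ * (y₁ - y₃) + x₁ * (z₃ - z₂) +
      (y₃ - y₂) * (x₁ * x₂ + x₂ * x₃ - x₁ * x₃) := by
  have hq1 : 0 < q₁ := hq2.trans hq12
  have hβ1 : 0 < β₁ := hβ2.trans hβ21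
  have hψpos : ∀ y : ℝ, 0 < y → y < deriv φ 0 → 0 < ψ y := fun _ hy hyc => psi_pos hψ hy hyc
  have hP₁ : q₁ * deriv ψ (β₁ * q₁) < 0 :=
    mul_neg_of_pos_of_neg hq1 (deriv_comp_mul_neg hψ' hβ1 le_rfl hq1 le_rfl hdom1)
  have hQ₁ : q₁ * deriv ψ (β₂ * q₁) < 0 :=
    mul_neg_of_pos_of_neg hq1 (deriv_comp_mul_neg hψ' hβ2 hβ21.le hq1 le_rfl hdom1)
  have hP₃ : q₃ * deriv ψ (β₁ * q₃) < 0 :=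
    mul_neg_of_pos_of_neg hq3 (deriv_comp_mul_neg hψ' hβ1 le_rfl hq3 hq13.le hdom1)
  have hw : y₁ - z₁ / x₁ < y₃ - z₃ / x₃ := by
    rw [hx₁, hx₃, hy₁, hy₃, hz₁, hz₃, div_sub_div_div_div_eq hP₁.ne,
      div_sub_div_div_div_eq hP₃.ne]
    exact sub_div_mul_deriv_lt_of_lt hψ' hA2 hq3 hq13 hβ2 hβ21 hdom1
  refine expr_pos_of_orderings ?_ ?_ ?_ ?_ ?_ ?_ hw
  · exact hx₁ ▸ div_pos_of_neg_of_neg hQ₁ hP₁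
  · exact hx₁ ▸ hx₂ ▸ mul_deriv_ratio_lt_of_lt hψ' hA2 hq2 hq12 hβ2 hβ21 hdom1
  · exact hx₁ ▸ hx₃ ▸ mul_deriv_ratio_lt_of_lt hψ' hA2 hq3 hq13 hβ2 hβ21 hdom1
  · exact hy₁ ▸ hy₂ ▸ div_mul_deriv_le_of_lt hψ' hψpos hA4 hq2 hq12 hβ2
      ((mul_lt_mul_of_pos_right hβ21 hq1).trans hdom1)
  · exact hz₁ ▸ hz₂ ▸ div_mul_deriv_le_of_lt hψ' hψpos hA4 hq2 hq12 hβ1 hdom1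
  · exact hz₁ ▸ div_nonpos_of_nonneg_of_nonpos (hψpos _ (mul_pos hβ1 hq1) hdom1).le hP₁.le

/-- Under (A1), (A2), (A4), with `q₁, q₂, q₃ > 0` pairwise distinct,
`q₁ > q₂`, `q₁ > q₃`, and `0 < β₂ < β₁`, `β₁ qⱼ < φ'(0)`, the expression
`E = x₃(z₁−z₂) + x₁x₃(y₁−y₂) + x₂(z₁−z₃) + x₁x₂(y₁−y₃) + x₁(z₃−z₂)
+ (y₃−y₂)(x₁x₂ + x₂x₃ − x₁x₃)` is positive. -/
theorem stmt_15 (φ ψ : ℝ → ℝ)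
    (hφC : ContDiff ℝ 2 φ)
    (hodd : ∀ x : ℝ, φ (-x) = -φ x)
    (hφ' : ∀ x : ℝ, 0 < deriv φ x)
    (hφ'' : ∀ x : ℝ, x ≠ 0 → x * deriv (deriv φ) x < 0)
    (hlim : ∃ L : ℝ, Filter.Tendsto φ Filter.atTop (nhds L))
    (hψ : ∀ y : ℝ, 0 < y → y ≤ deriv φ 0 → 0 ≤ ψ y ∧ deriv φ (ψ y) = y)
    (hψinv : ∀ x : ℝ, 0 ≤ x → ψ (deriv φ x) = x)
    (hψ' : ∀ y : ℝ, 0 < y → y < deriv φ 0 → deriv ψ y < 0)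
    (hA2 : ∀ p q : ℝ, 0 < q → q < p →
      StrictMonoOn (fun β => deriv ψ (β * p) / deriv ψ (β * q))
        (Set.Ioo 0 (deriv φ 0 / p)))
    (hA4 : ∀ p q : ℝ, 0 < q → q < p →
      StrictAntiOn (fun β => ψ (β * p) / ψ (β * q))
        (Set.Ioo 0 (deriv φ 0 / p)))
    (q₁ q₂ q₃ β₁ β₂ : ℝ)
    (hq2 : 0 < q₂) (hq3 : 0 < q₃) (hq23 : q₂ ≠ q₃)
    (hq12 : q₂ < q₁) (hq13 : q₃ < q₁)
    (hβ2 : 0 < β₂) (hβ21 : β₂ < β₁)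
    (hdom1 : β₁ * q₁ < deriv φ 0) (hdom2 : β₁ * q₂ < deriv φ 0)
    (hdom3 : β₁ * q₃ < deriv φ 0)
    (x₁ x₂ x₃ y₁ y₂ y₃ z₁ z₂ z₃ : ℝ)
    (hx₁ : x₁ = (q₁ * deriv ψ (β₂ * q₁)) / (q₁ * deriv ψ (β₁ * q₁)))
    (hx₂ : x₂ = (q₂ * deriv ψ (β₂ * q₂)) / (q₂ * deriv ψ (β₁ * q₂)))
    (hx₃ : x₃ = (q₃ * deriv ψ (β₂ * q₃)) / (q₃ * deriv ψ (β₁ * q₃)))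
    (hy₁ : y₁ = ψ (β₂ * q₁) / (q₁ * deriv ψ (β₂ * q₁)))
    (hy₂ : y₂ = ψ (β₂ * q₂) / (q₂ * deriv ψ (β₂ * q₂)))
    (hy₃ : y₃ = ψ (β₂ * q₃) / (q₃ * deriv ψ (β₂ * q₃)))
    (hz₁ : z₁ = ψ (β₁ * q₁) / (q₁ * deriv ψ (β₁ * q₁)))
    (hz₂ : z₂ = ψ (β₁ * q₂) / (q₂ * deriv ψ (β₁ * q₂)))
    (hz₃ : z₃ = ψ (β₁ * q₃) / (q₃ * deriv ψ (β₁ * q₃))) :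
    0 < x₃ * (z₁ - z₂) + x₁ * x₃ * (y₁ - y₂) + x₂ * (z₁ - z₃) +
      x₁ * x₂ * (y₁ - y₃) + x₁ * (z₃ - z₂) +
      (y₃ - y₂) * (x₁ * x₂ + x₂ * x₃ - x₁ * x₃) :=
  stmt_15_general φ ψ hψ hψ' hA2 hA4 q₁ q₂ q₃ β₁ β₂ hq2 hq3 hq12 hq13 hβ2 hβ21 hdom1 x₁ x₂ x₃ y₁ y₂
    y₃ z₁ z₂ z₃ hx₁ hx₂ hx₃ hy₁ hy₂ hy₃ hz₁ hz₂ hz₃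
end

section
/- Let q₃ > q₁ > q₂ > 0 and 0 < β₂ < β₁ with β₁·q_j < φ'(0) for j = 1,2,3. Then: (i) x₂ > x₁ > x₃ > 0; (ii) z₃ > z₁ > z₂; (iii) y₃ > y₁ > y₂; (iv) z₁/x₁ > z₂/x₂. -/
/-!
Write `z_β(q) = ψ(βq) / (q ψ'(βq))`. The heart of the matter is that `z_β` is strictly increasing
in `q`. By (A4) the quotient `ψ(βp)/ψ(βq)` (`q < p`) decreases in `β`, so it lies below the
slope quotient of the two functions `β ↦ ψ(βp)`, `β ↦ ψ(βq)` over `[β/2, β]`; by Cauchy's mean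
value theorem that slope quotient is a quotient of derivatives at an interior point, which (A2)
bounds by the quotient of derivatives at `β`. Comparing the ends gives `z_β(q) < z_β(p)`, i.e.
(ii) and (iii). Part (i) is (A2) with the roles of `β` and `q` exchanged, and (iv) combines the
monotonicity of `z_{β₂}` with (A4) for the positive factor `ψ(β₁q)/ψ(β₂q)`.
-/

open Set

theorem div_lt_sub_div_sub_of_div_lt_div {a₀ a₁ b₀ b₁ : ℝ} (hb₁ : 0 < b₁) (hb : b₁ < b₀)
    (h : a₁ / b₁ < a₀ / b₀) : a₁ / b₁ < (a₀ - a₁) / (b₀ - b₁) := by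
  rw [div_lt_div_iff₀ hb₁ (hb₁.trans hb)] at h
  rw [div_lt_div_iff₀ hb₁ (sub_pos.2 hb)]
  linear_combination h

theorem div_eq_div_mul_div_of_ne_zero {a b c : ℝ} (hc : c ≠ 0) : a / b = c / b * (a / c) := by
  rw [div_mul_div_comm, mul_comm c, mul_div_mul_right _ _ hc]

theorem div_lt_deriv_div_of_strictAnti {f g f' g' : ℝ → ℝ} {s t : ℝ} (hst : s < t)
    (hf : ∀ x ∈ Icc s t, HasDerivAt f (f' x) x) (hg : ∀ x ∈ Icc s t, HasDerivAt g (g' x) x)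
    (hg' : ∀ x ∈ Ioo s t, g' x < 0) (hgt : 0 < g t) (hfg : f t / g t < f s / g s)
    (hfg' : ∀ c ∈ Ioo s t, f' c / g' c < f' t / g' t) :
    f t / g t < f' t / g' t := by
  have hfc : ContinuousOn f (Icc s t) := fun x hx => (hf x hx).continuousAt.continuousWithinAt
  have hgc : ContinuousOn g (Icc s t) := fun x hx => (hg x hx).continuousAt.continuousWithinAt
  have hg_lt : g t < g s :=
    strictAntiOn_of_hasDerivWithinAt_neg (convex_Icc s t) hgc
      (fun x hx => (hg x (interior_subset hx)).hasDerivWithinAt)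
      (fun x hx => hg' x (by rwa [interior_Icc] at hx))
      (left_mem_Icc.2 hst.le) (right_mem_Icc.2 hst.le) hst
  obtain ⟨c, hc, hcauchy⟩ := exists_ratio_hasDerivAt_eq_ratio_slope f f' hst hfc
    (fun x hx => hf x (Ioo_subset_Icc_self hx)) g g' hgc
    (fun x hx => hg x (Ioo_subset_Icc_self hx))
  have hslope : (f s - f t) / (g s - g t) = f' c / g' c := by
    rw [div_eq_div_iff (sub_pos.2 hg_lt).ne' (hg' c hc).ne]
    linear_combination hcauchy
  calc f t / g t < (f s - f t) / (g s - g t) := div_lt_sub_div_sub_of_div_lt_div hgt hg_lt hfg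
    _ = f' c / g' c := hslope
    _ < f' t / g' t := hfg' c hc

section

variable {ψ : ℝ → ℝ} {M : ℝ}

theorem hasDerivAt_comp_mul_const (hψ' : ∀ y, 0 < y → y < M → deriv ψ y < 0) {β p : ℝ}
    (h₀ : 0 < β * p) (hM : β * p < M) :
    HasDerivAt (fun b => ψ (b * p)) (p * deriv ψ (β * p)) β := by
  have hd : DifferentiableAt ℝ ψ (β * p) :=
    differentiableAt_of_deriv_ne_zero (hψ' _ h₀ hM).ne
  rw [mul_comm]
  exact hd.hasDerivAt.comp β (hasDerivAt_mul_const p)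

theorem mem_Ioo_div_of_mul_lt {β p : ℝ} (hβ : 0 < β) (hp : 0 < p) (hM : β * p < M) :
    β ∈ Ioo 0 (M / p) :=
  ⟨hβ, (lt_div_iff₀ hp).2 hM⟩

variable (hψpos : ∀ y, 0 < y → y < M → 0 < ψ y) (hψ' : ∀ y, 0 < y → y < M → deriv ψ y < 0)
  (hA2 : ∀ p q : ℝ, 0 < q → q < p →
    StrictMonoOn (fun β => deriv ψ (β * p) / deriv ψ (β * q)) (Ioo 0 (M / p)))
  (hA4 : ∀ p q : ℝ, 0 < q → q < p →
    StrictAntiOn (fun β => ψ (β * p) / ψ (β * q)) (Ioo 0 (M / p)))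
include hψ'

include hA2 in
theorem deriv_div_deriv_lt_of_lt {p q β₁ β₂ : ℝ} (hq : 0 < q) (hqp : q < p) (hβ₂ : 0 < β₂)
    (hβ : β₂ < β₁) (hM : β₁ * p < M) :
    deriv ψ (β₂ * p) / deriv ψ (β₁ * p) < deriv ψ (β₂ * q) / deriv ψ (β₁ * q) := by
  have hp := hq.trans hqp
  have hβ₁ := hβ₂.trans hβ
  have h₁q : β₁ * q < M := (mul_lt_mul_of_pos_left hqp hβ₁).trans hM
  have h₂p : β₂ * p < M := (mul_lt_mul_of_pos_right hβ hp).trans hM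
  have h₂q : β₂ * q < M := (mul_lt_mul_of_pos_right hβ hq).trans h₁q
  have hA := hA2 p q hq hqp (mem_Ioo_div_of_mul_lt hβ₂ hp h₂p)
    (mem_Ioo_div_of_mul_lt hβ₁ hp hM) hβ
  rw [div_lt_div_iff_of_neg (hψ' _ (by positivity) h₂q) (hψ' _ (by positivity) h₁q)] at hA
  rw [div_lt_div_iff_of_neg (hψ' _ (by positivity) hM) (hψ' _ (by positivity) h₁q)]
  linarith

include hψpos hA2 hA4 in
theorem psi_div_mul_deriv_lt_of_lt {p q β : ℝ} (hq : 0 < q) (hqp : q < p) (hβ : 0 < β)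
    (hM : β * p < M) :
    ψ (β * q) / (q * deriv ψ (β * q)) < ψ (β * p) / (p * deriv ψ (β * p)) := by
  have hp := hq.trans hqp
  have hdom : ∀ x ∈ Icc (β / 2) β, 0 < x * q ∧ x * q < x * p ∧ x * p < M := by
    intro x hx
    have hx₀ : 0 < x := (half_pos hβ).trans_le hx.1
    exact ⟨mul_pos hx₀ hq, mul_lt_mul_of_pos_left hqp hx₀,
      (mul_le_mul_of_nonneg_right hx.2 hp.le).trans_lt hM⟩
  have hmem : ∀ x ∈ Icc (β / 2) β, x ∈ Ioo 0 (M / p) := fun x hx =>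
    mem_Ioo_div_of_mul_lt ((half_pos hβ).trans_le hx.1) hp (hdom x hx).2.2
  have hβmem : β ∈ Icc (β / 2) β := right_mem_Icc.2 (half_le_self hβ.le)
  obtain ⟨hβq, hβqp, hβp⟩ := hdom β hβmem
  have hratio : ψ (β * p) / ψ (β * q) < p * deriv ψ (β * p) / (q * deriv ψ (β * q)) := by
    refine div_lt_deriv_div_of_strictAnti (half_lt_self hβ)
      (fun x hx => hasDerivAt_comp_mul_const hψ' ((hdom x hx).1.trans (hdom x hx).2.1)
        (hdom x hx).2.2)
      (fun x hx => hasDerivAt_comp_mul_const hψ' (hdom x hx).1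
        ((hdom x hx).2.1.trans (hdom x hx).2.2))
      (fun x hx => ?_) (hψpos _ hβq (hβqp.trans hβp))
      (hA4 p q hq hqp (hmem _ (left_mem_Icc.2 (half_le_self hβ.le))) (hmem β hβmem)
        (half_lt_self hβ))
      (fun c hc => ?_)
    · obtain ⟨hxq, hxqp, hxp⟩ := hdom x (Ioo_subset_Icc_self hx)
      exact mul_neg_of_pos_of_neg hq (hψ' _ hxq (hxqp.trans hxp))
    · simp only [mul_div_mul_comm p]
      exact mul_lt_mul_of_pos_left
        (hA2 p q hq hqp (hmem c (Ioo_subset_Icc_self hc)) (hmem β hβmem) hc.2) (div_pos hp hq)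
  have hψ'p := mul_neg_of_pos_of_neg hp (hψ' _ (hβq.trans hβqp) hβp)
  have hψ'q := mul_neg_of_pos_of_neg hq (hψ' _ hβq (hβqp.trans hβp))
  rw [← neg_div_neg_eq (p * _), div_lt_div_iff₀ (hψpos _ hβq (hβqp.trans hβp)) (neg_pos.2 hψ'q)]
    at hratio
  rw [div_lt_div_iff_of_neg hψ'q hψ'p]
  linarith

include hψpos hA2 hA4 in
theorem psi_div_mul_deriv_mixed_lt_of_lt {p q β₁ β₂ : ℝ} (hq : 0 < q) (hqp : q < p)
    (hβ₂ : 0 < β₂) (hβ : β₂ < β₁) (hM : β₁ * p < M) :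
    ψ (β₁ * q) / (q * deriv ψ (β₂ * q)) < ψ (β₁ * p) / (p * deriv ψ (β₂ * p)) := by
  have hp := hq.trans hqp
  have hβ₁ := hβ₂.trans hβ
  have h₁q : β₁ * q < M := (mul_lt_mul_of_pos_left hqp hβ₁).trans hM
  have h₂p : β₂ * p < M := (mul_lt_mul_of_pos_right hβ hp).trans hM
  have h₂q : β₂ * q < M := (mul_lt_mul_of_pos_right hβ hq).trans h₁q
  have hψ₁p := hψpos _ (mul_pos hβ₁ hp) hM
  have hψ₁q := hψpos _ (mul_pos hβ₁ hq) h₁q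
  have hψ₂p := hψpos _ (mul_pos hβ₂ hp) h₂p
  have hψ₂q := hψpos _ (mul_pos hβ₂ hq) h₂q
  have hz := psi_div_mul_deriv_lt_of_lt hψpos hψ' hA2 hA4 hq hqp hβ₂ h₂p
  have hzp : ψ (β₂ * p) / (p * deriv ψ (β₂ * p)) < 0 :=
    div_neg_of_pos_of_neg hψ₂p (mul_neg_of_pos_of_neg hp (hψ' _ (mul_pos hβ₂ hp) h₂p))
  have hr : ψ (β₁ * p) / ψ (β₂ * p) < ψ (β₁ * q) / ψ (β₂ * q) := by
    have hA := hA4 p q hq hqp (mem_Ioo_div_of_mul_lt hβ₂ hp h₂p)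
      (mem_Ioo_div_of_mul_lt hβ₁ hp hM) hβ
    rw [div_lt_div_iff₀ hψ₁q hψ₂q] at hA
    rw [div_lt_div_iff₀ hψ₂p hψ₂q]
    linarith
  rw [div_eq_div_mul_div_of_ne_zero (a := ψ (β₁ * q)) hψ₂q.ne',
    div_eq_div_mul_div_of_ne_zero (a := ψ (β₁ * p)) hψ₂p.ne']
  calc _ < ψ (β₂ * p) / (p * deriv ψ (β₂ * p)) * (ψ (β₁ * q) / ψ (β₂ * q)) :=
        mul_lt_mul_of_pos_right hz (div_pos hψ₁q hψ₂q)
    _ < _ := mul_lt_mul_of_neg_left hr hzp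

end

theorem pos_of_deriv_apply_eq {φ ψ : ℝ → ℝ}
    (hψ : ∀ y : ℝ, 0 < y → y ≤ deriv φ 0 → 0 ≤ ψ y ∧ deriv φ (ψ y) = y) {y : ℝ} (hy : 0 < y)
    (hyM : y < deriv φ 0) : 0 < ψ y := by
  obtain ⟨hψ₀, hφψ⟩ := hψ y hy hyM.le
  refine hψ₀.lt_of_ne fun h => hyM.ne ?_
  rw [← h] at hφψ
  exact hφψ.symm

theorem stmt_16_general (φ ψ : ℝ → ℝ)
    (hψ : ∀ y : ℝ, 0 < y → y ≤ deriv φ 0 → 0 ≤ ψ y ∧ deriv φ (ψ y) = y)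
    (hψ' : ∀ y : ℝ, 0 < y → y < deriv φ 0 → deriv ψ y < 0)
    (hA2 : ∀ p q : ℝ, 0 < q → q < p →
      StrictMonoOn (fun β => deriv ψ (β * p) / deriv ψ (β * q))
        (Set.Ioo 0 (deriv φ 0 / p)))
    (hA4 : ∀ p q : ℝ, 0 < q → q < p →
      StrictAntiOn (fun β => ψ (β * p) / ψ (β * q))
        (Set.Ioo 0 (deriv φ 0 / p)))
    (q₁ q₂ q₃ β₁ β₂ : ℝ)
    (hq2 : 0 < q₂) (hq21 : q₂ < q₁) (hq13 : q₁ < q₃)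
    (hβ2 : 0 < β₂) (hβ21 : β₂ < β₁)
    (hdom1 : β₁ * q₁ < deriv φ 0)
    (hdom3 : β₁ * q₃ < deriv φ 0)
    (x₁ x₂ x₃ y₁ y₂ y₃ z₁ z₂ z₃ : ℝ)
    (hx₁ : x₁ = (q₁ * deriv ψ (β₂ * q₁)) / (q₁ * deriv ψ (β₁ * q₁)))
    (hx₂ : x₂ = (q₂ * deriv ψ (β₂ * q₂)) / (q₂ * deriv ψ (β₁ * q₂)))
    (hx₃ : x₃ = (q₃ * deriv ψ (β₂ * q₃)) / (q₃ * deriv ψ (β₁ * q₃)))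
    (hy₁ : y₁ = ψ (β₂ * q₁) / (q₁ * deriv ψ (β₂ * q₁)))
    (hy₂ : y₂ = ψ (β₂ * q₂) / (q₂ * deriv ψ (β₂ * q₂)))
    (hy₃ : y₃ = ψ (β₂ * q₃) / (q₃ * deriv ψ (β₂ * q₃)))
    (hz₁ : z₁ = ψ (β₁ * q₁) / (q₁ * deriv ψ (β₁ * q₁)))
    (hz₂ : z₂ = ψ (β₁ * q₂) / (q₂ * deriv ψ (β₁ * q₂)))
    (hz₃ : z₃ = ψ (β₁ * q₃) / (q₃ * deriv ψ (β₁ * q₃))) :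
    (0 < x₃ ∧ x₃ < x₁ ∧ x₁ < x₂) ∧ (z₂ < z₁ ∧ z₁ < z₃) ∧
      (y₂ < y₁ ∧ y₁ < y₃) ∧ z₂ / x₂ < z₁ / x₁ := by
  have hψpos : ∀ y, 0 < y → y < deriv φ 0 → 0 < ψ y := fun y hy hyM =>
    pos_of_deriv_apply_eq hψ hy hyM
  have hq₁ := hq2.trans hq21
  have hq₃ := hq₁.trans hq13
  have hβ₁ := hβ2.trans hβ21
  have hdom₁₂ : β₁ * q₂ < deriv φ 0 := (mul_lt_mul_of_pos_left hq21 hβ₁).trans hdom1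
  have hdom₂₁ : β₂ * q₁ < deriv φ 0 := (mul_lt_mul_of_pos_right hβ21 hq₁).trans hdom1
  have hdom₂₃ : β₂ * q₃ < deriv φ 0 := (mul_lt_mul_of_pos_right hβ21 hq₃).trans hdom3
  have hx (q : ℝ) (hq : 0 < q) : q * deriv ψ (β₂ * q) / (q * deriv ψ (β₁ * q)) =
      deriv ψ (β₂ * q) / deriv ψ (β₁ * q) := mul_div_mul_left _ _ hq.ne'
  have hzx₁ : z₁ / x₁ = ψ (β₁ * q₁) / (q₁ * deriv ψ (β₂ * q₁)) := by
    rw [hz₁, hx₁, div_div_div_cancel_right₀ (mul_neg_of_pos_of_neg hq₁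
      (hψ' _ (mul_pos hβ₁ hq₁) hdom1)).ne]
  have hzx₂ : z₂ / x₂ = ψ (β₁ * q₂) / (q₂ * deriv ψ (β₂ * q₂)) := by
    rw [hz₂, hx₂, div_div_div_cancel_right₀ (mul_neg_of_pos_of_neg hq2
      (hψ' _ (mul_pos hβ₁ hq2) hdom₁₂)).ne]
  rw [hzx₁, hzx₂]
  subst hx₁ hx₂ hx₃ hy₁ hy₂ hy₃ hz₁ hz₂ hz₃
  rw [hx q₁ hq₁, hx q₂ hq2, hx q₃ hq₃]
  refine ⟨⟨?_, ?_, ?_⟩, ⟨?_, ?_⟩, ⟨?_, ?_⟩, ?_⟩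
  · exact div_pos_of_neg_of_neg (hψ' _ (mul_pos hβ2 hq₃) hdom₂₃) (hψ' _ (mul_pos hβ₁ hq₃) hdom3)
  · exact deriv_div_deriv_lt_of_lt hψ' hA2 hq₁ hq13 hβ2 hβ21 hdom3
  · exact deriv_div_deriv_lt_of_lt hψ' hA2 hq2 hq21 hβ2 hβ21 hdom1
  · exact psi_div_mul_deriv_lt_of_lt hψpos hψ' hA2 hA4 hq2 hq21 hβ₁ hdom1
  · exact psi_div_mul_deriv_lt_of_lt hψpos hψ' hA2 hA4 hq₁ hq13 hβ₁ hdom3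
  · exact psi_div_mul_deriv_lt_of_lt hψpos hψ' hA2 hA4 hq2 hq21 hβ2 hdom₂₁
  · exact psi_div_mul_deriv_lt_of_lt hψpos hψ' hA2 hA4 hq₁ hq13 hβ2 hdom₂₃
  · exact psi_div_mul_deriv_mixed_lt_of_lt hψpos hψ' hA2 hA4 hq2 hq21 hβ2 hβ21 hdom1

/-- Under (A1), (A2), (A4) and `ψ(y) → ∞` as `y → 0⁺`, with
`q₃ > q₁ > q₂ > 0` and `0 < β₂ < β₁`, `β₁ qⱼ < φ'(0)`:
(i) `x₂ > x₁ > x₃ > 0`, (ii) `z₃ > z₁ > z₂`, (iii) `y₃ > y₁ > y₂`,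
(iv) `z₁/x₁ > z₂/x₂`. -/
theorem stmt_16 (φ ψ : ℝ → ℝ)
    (hφC : ContDiff ℝ 2 φ)
    (hodd : ∀ x : ℝ, φ (-x) = -φ x)
    (hφ' : ∀ x : ℝ, 0 < deriv φ x)
    (hφ'' : ∀ x : ℝ, x ≠ 0 → x * deriv (deriv φ) x < 0)
    (hlim : ∃ L : ℝ, Filter.Tendsto φ Filter.atTop (nhds L))
    (hψ : ∀ y : ℝ, 0 < y → y ≤ deriv φ 0 → 0 ≤ ψ y ∧ deriv φ (ψ y) = y)
    (hψinv : ∀ x : ℝ, 0 ≤ x → ψ (deriv φ x) = x)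
    (hψ' : ∀ y : ℝ, 0 < y → y < deriv φ 0 → deriv ψ y < 0)
    (hψtop : Filter.Tendsto ψ (nhdsWithin 0 (Set.Ioi 0)) Filter.atTop)
    (hA2 : ∀ p q : ℝ, 0 < q → q < p →
      StrictMonoOn (fun β => deriv ψ (β * p) / deriv ψ (β * q))
        (Set.Ioo 0 (deriv φ 0 / p)))
    (hA4 : ∀ p q : ℝ, 0 < q → q < p →
      StrictAntiOn (fun β => ψ (β * p) / ψ (β * q))
        (Set.Ioo 0 (deriv φ 0 / p)))
    (q₁ q₂ q₃ β₁ β₂ : ℝ)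
    (hq2 : 0 < q₂) (hq21 : q₂ < q₁) (hq13 : q₁ < q₃)
    (hβ2 : 0 < β₂) (hβ21 : β₂ < β₁)
    (hdom1 : β₁ * q₁ < deriv φ 0) (hdom2 : β₁ * q₂ < deriv φ 0)
    (hdom3 : β₁ * q₃ < deriv φ 0)
    (x₁ x₂ x₃ y₁ y₂ y₃ z₁ z₂ z₃ : ℝ)
    (hx₁ : x₁ = (q₁ * deriv ψ (β₂ * q₁)) / (q₁ * deriv ψ (β₁ * q₁)))
    (hx₂ : x₂ = (q₂ * deriv ψ (β₂ * q₂)) / (q₂ * deriv ψ (β₁ * q₂)))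
    (hx₃ : x₃ = (q₃ * deriv ψ (β₂ * q₃)) / (q₃ * deriv ψ (β₁ * q₃)))
    (hy₁ : y₁ = ψ (β₂ * q₁) / (q₁ * deriv ψ (β₂ * q₁)))
    (hy₂ : y₂ = ψ (β₂ * q₂) / (q₂ * deriv ψ (β₂ * q₂)))
    (hy₃ : y₃ = ψ (β₂ * q₃) / (q₃ * deriv ψ (β₂ * q₃)))
    (hz₁ : z₁ = ψ (β₁ * q₁) / (q₁ * deriv ψ (β₁ * q₁)))
    (hz₂ : z₂ = ψ (β₁ * q₂) / (q₂ * deriv ψ (β₁ * q₂)))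
    (hz₃ : z₃ = ψ (β₁ * q₃) / (q₃ * deriv ψ (β₁ * q₃))) :
    (0 < x₃ ∧ x₃ < x₁ ∧ x₁ < x₂) ∧ (z₂ < z₁ ∧ z₁ < z₃) ∧
      (y₂ < y₁ ∧ y₁ < y₃) ∧ z₂ / x₂ < z₁ / x₁ :=
  stmt_16_general φ ψ hψ hψ' hA2 hA4 q₁ q₂ q₃ β₁ β₂ hq2 hq21 hq13 hβ2 hβ21 hdom1 hdom3 x₁ x₂ x₃ y₁
    y₂ y₃ z₁ z₂ z₃ hx₁ hx₂ hx₃ hy₁ hy₂ hy₃ hz₁ hz₂ hz₃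
end

section
/- Let n ≥ 3, assume c_j > 0 and l_j > 0 for all j, q_j = l_j/c_j, and the q_j are pairwise distinct. Then f cannot have local maxima on P in two different side orthants: there do not exist points x₀, x₁ ∈ P, both local maxima of f on P, with x₀₁ < 0 and x₀_j > 0 for all j ≥ 2, and with x₁₂ < 0 and x₁_j > 0 for all j ≠ 2. -/
/-!
At a local maximum `x` of `f` on `P` whose only negative coordinate is `x i`, the first-order
condition `c_j φ'(x_j) = λ l_j` reads `φ'(x_j) = β q_j`, i.e. `|x_j| = ψ(β q_j)`, and the
second-order condition on the hyperplane `∑ l_j w_j = 0`, tested against `w_j ∝ q_j |ψ'(β q_j)|`,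
becomes `∑_{j ≠ i} l_j q_j |ψ'(β q_j)| ≤ l_i q_i |ψ'(β q_i)|`.

Take two such maxima, with multipliers `β` (negative coordinate `i`) and `γ` (negative
coordinate `k`), where `q_i < q_k`. A third coordinate makes both second-order inequalities
strict, and the monotonicity `hA2` of `ψ'(βp)/ψ'(βq)` then forces `β < γ`. Writing
`m_j(β) = l_j ψ(β q_j)`, `hA2` and `hA4` give `∑_{j ∉ {i,k}} (m_j(β) - m_j(γ)) ≤ m_i(β) - m_k(β)`,
whereas subtracting the equations `∑_j m_j - 2 m_i = b` of `P` at the two points shows that the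
left side exceeds the right one by `m_i(γ) - m_k(γ)`, which `hA4` makes positive.
-/

open Set Filter Topology

theorem Function.Odd.deriv {f : ℝ → ℝ} (hf : f.Odd) : (deriv f).Even := fun x => by
  have h := deriv_comp_neg (f := f) (x := x)
  rw [show (fun y => f (-y)) = fun y => -f y from funext hf, deriv.fun_neg] at h
  linarith

theorem Function.Even.deriv {f : ℝ → ℝ} (hf : f.Even) : (deriv f).Odd := fun x => by
  have h := deriv_comp_neg (f := f) (x := -x)
  rw [show (fun y => f (-y)) = f from funext hf, neg_neg] at h
  linarith

theorem Function.Even.apply_abs {α : Type*} {f : ℝ → α} (hf : f.Even) (x : ℝ) :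
    f |x| = f x := by
  rcases abs_choice x with h | h <;> rw [h]
  exact hf x

theorem HasDerivAt.nonpos_of_antitoneOn {g : ℝ → ℝ} {g' x : ℝ} {s : Set ℝ}
    (hd : HasDerivAt g g' x) (hs : s ∈ 𝓝 x) (hg : AntitoneOn g s) : g' ≤ 0 :=
  hd.hasDerivWithinAt.nonpos_of_antitoneOn
    (accPt_iff_frequently_nhdsNE.2 (eventually_nhdsWithin_of_eventually_nhds hs).frequently) hg

/-- If `g'' x > 0`, the second-derivative test makes `x` a local minimum too, so `g` is locally
constant and `g'' x = 0`. -/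
theorem IsLocalMax.deriv_deriv_nonpos {g : ℝ → ℝ} {x : ℝ} (h : IsLocalMax g x)
    (hc : ContinuousAt g x) : deriv (deriv g) x ≤ 0 := by
  by_contra! hpos
  have hmin := isLocalMin_of_deriv_deriv_pos hpos h.deriv_eq_zero hc
  have hconst : g =ᶠ[𝓝 x] fun _ => g x := by
    filter_upwards [h, hmin] with y h₁ h₂ using le_antisymm h₁ h₂
  have hderiv : deriv g =ᶠ[𝓝 x] fun _ => 0 := by
    filter_upwards [hconst.eventuallyEq_nhds] with y hy
    rw [hy.deriv_eq, deriv_const]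
  rw [hderiv.deriv_eq, deriv_const] at hpos
  exact hpos.false

theorem IsLocalMaxOn.isLocalMax_comp_line {E : Type*} [NormedAddCommGroup E] [NormedSpace ℝ E]
    {f : E → ℝ} {P : Set E} {x w : E} (h : IsLocalMaxOn f P x) (hw : ∀ t : ℝ, x + t • w ∈ P) :
    IsLocalMax (fun t : ℝ => f (x + t • w)) 0 := by
  have hline : Tendsto (fun t : ℝ => x + t • w) (𝓝 0) (𝓝[P] x) := by
    refine tendsto_nhdsWithin_iff.2 ⟨?_, Eventually.of_forall hw⟩
    simpa using ((continuous_id.smul continuous_const).const_add x).tendsto (0 : ℝ)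
  have hmax : IsMaxFilter f (𝓝[P] x) (x + (0 : ℝ) • w) := by rw [zero_smul, add_zero]; exact h
  exact IsMaxFilter.comp_tendsto (g := fun t : ℝ => x + t • w) hmax hline

section Line

variable {ι : Type*} [Fintype ι] {g : ℝ → ℝ} {c y w : ι → ℝ}

theorem hasDerivAt_sum_comp_line (hg : Differentiable ℝ g) (t : ℝ) :
    HasDerivAt (fun t => ∑ j, c j * g (y j + t * w j))
      (∑ j, c j * (deriv g (y j + t * w j) * w j)) t :=
  HasDerivAt.fun_sum fun j _ =>
    ((hg _).hasDerivAt.comp t (((hasDerivAt_id t).mul_const (w j)).const_add (y j))).const_mul _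
      |>.congr_deriv (by simp)

theorem IsLocalMax.sum_deriv_mul_eq_zero (hg : Differentiable ℝ g)
    (h : IsLocalMax (fun t => ∑ j, c j * g (y j + t * w j)) 0) :
    ∑ j, c j * (deriv g (y j) * w j) = 0 := by
  simpa using h.hasDerivAt_eq_zero (hasDerivAt_sum_comp_line hg 0)

theorem IsLocalMax.sum_deriv_deriv_mul_sq_nonpos (hg : ContDiff ℝ 2 g)
    (h : IsLocalMax (fun t => ∑ j, c j * g (y j + t * w j)) 0) :
    ∑ j, c j * (deriv (deriv g) (y j) * w j ^ 2) ≤ 0 := by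
  have hg₁ := hg.differentiable (by norm_num)
  have hderiv : deriv (fun t => ∑ j, c j * g (y j + t * w j)) =
      fun t => ∑ j, (c j * w j) * deriv g (y j + t * w j) := by
    ext t
    rw [(hasDerivAt_sum_comp_line hg₁ t).deriv]
    exact Finset.sum_congr rfl fun j _ => by ring
  have h₂ := h.deriv_deriv_nonpos (hasDerivAt_sum_comp_line hg₁ 0).continuousAt
  rw [hderiv, (hasDerivAt_sum_comp_line hg.differentiable_deriv_two 0).deriv] at h₂
  simpa [mul_assoc, mul_left_comm, sq] using h₂

end Line

theorem isLocalMax_sum_comp_line {ι : Type*} [Fintype ι] {φ : ℝ → ℝ} {c l : ι → ℝ} {b : ℝ}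
    {f : EuclideanSpace ℝ ι → ℝ} (hf : ∀ x : EuclideanSpace ℝ ι, f x = ∑ j, c j * φ (x j))
    {x : EuclideanSpace ℝ ι} (hx : ∑ j, l j * x j = b)
    (hmax : ∃ ε > 0, ∀ z ∈ {z : EuclideanSpace ℝ ι | ∑ j, l j * z j = b}, ‖z - x‖ < ε → f z ≤ f x)
    {w : ι → ℝ} (hw : ∑ j, l j * w j = 0) :
    IsLocalMax (fun t => ∑ j, c j * φ (x j + t * w j)) 0 := by
  obtain ⟨ε, hε, h⟩ := hmax
  have hloc : IsLocalMaxOn f {z : EuclideanSpace ℝ ι | ∑ j, l j * z j = b} x := by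
    filter_upwards [inter_mem_nhdsWithin _ (Metric.ball_mem_nhds x hε)] with z ⟨hzP, hz⟩
    exact h z hzP (by rwa [Metric.mem_ball, dist_eq_norm] at hz)
  have hline := hloc.isLocalMax_comp_line (w := WithLp.toLp 2 w) fun t => by
    simp [mul_add, Finset.sum_add_distrib, mul_left_comm _ t, ← Finset.mul_sum, hw, hx]
  simpa [hf] using hline

section Inverse

variable {φ ψ : ℝ → ℝ}

theorem strictAntiOn_deriv_Ici_zero (hφC : ContDiff ℝ 2 φ)
    (hφ'' : ∀ x : ℝ, x ≠ 0 → x * deriv (deriv φ) x < 0) : StrictAntiOn (deriv φ) (Ici 0) := by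
  refine strictAntiOn_of_deriv_neg (convex_Ici 0) (hφC.continuous_deriv (by norm_num)).continuousOn
    fun x hx => ?_
  rw [interior_Ici] at hx
  exact neg_of_mul_neg_right (hφ'' x hx.ne') hx.le

theorem deriv_lt_deriv_zero (hφC : ContDiff ℝ 2 φ) (hodd : φ.Odd)
    (hφ'' : ∀ x : ℝ, x ≠ 0 → x * deriv (deriv φ) x < 0) {x : ℝ} (hx : x ≠ 0) :
    deriv φ x < deriv φ 0 := by
  rw [← hodd.deriv.apply_abs]
  exact strictAntiOn_deriv_Ici_zero hφC hφ'' (mem_Ici.2 le_rfl) (abs_nonneg x) (abs_pos.2 hx)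

theorem pos_of_mem_Ioo_deriv_zero
    (hψ : ∀ y : ℝ, 0 < y → y ≤ deriv φ 0 → 0 ≤ ψ y ∧ deriv φ (ψ y) = y)
    {y : ℝ} (hy : y ∈ Ioo 0 (deriv φ 0)) : 0 < ψ y := by
  obtain ⟨hψ₀, hφψ⟩ := hψ y hy.1 hy.2.le
  refine hψ₀.lt_of_ne fun h => ?_
  rw [← h] at hφψ
  exact hy.2.ne hφψ.symm

theorem continuousAt_of_mem_Ioo_deriv_zero (hφC : ContDiff ℝ 2 φ) (hodd : φ.Odd)
    (hφ' : ∀ x : ℝ, 0 < deriv φ x) (hφ'' : ∀ x : ℝ, x ≠ 0 → x * deriv (deriv φ) x < 0)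
    (hψ : ∀ y : ℝ, 0 < y → y ≤ deriv φ 0 → 0 ≤ ψ y ∧ deriv φ (ψ y) = y)
    (hψinv : ∀ x : ℝ, 0 ≤ x → ψ (deriv φ x) = x)
    {y : ℝ} (hy : y ∈ Ioo 0 (deriv φ 0)) : ContinuousAt ψ y := by
  have hanti : AntitoneOn ψ (Ioo 0 (deriv φ 0)) := fun a ha a' ha' haa' => by
    by_contra! h
    have := strictAntiOn_deriv_Ici_zero hφC hφ'' (hψ a ha.1 ha.2.le).1 (hψ a' ha'.1 ha'.2.le).1 h
    rw [(hψ a ha.1 ha.2.le).2, (hψ a' ha'.1 ha'.2.le).2] at this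
    exact this.not_ge haa'
  have himage : Iio 0 ⊆ (-ψ) '' Ioo 0 (deriv φ 0) := fun x hx =>
    ⟨deriv φ (-x), ⟨hφ' _, deriv_lt_deriv_zero hφC hodd hφ'' (neg_ne_zero.2 hx.ne)⟩,
      by simp [hψinv (-x) (neg_nonneg.2 hx.le)]⟩
  have hneg : ContinuousAt (-ψ) y :=
    continuousAt_of_monotoneOn_of_image_mem_nhds hanti.neg (isOpen_Ioo.mem_nhds hy)
      (mem_of_superset (Iio_mem_nhds (neg_neg_iff_pos.2 (pos_of_mem_Ioo_deriv_zero hψ hy)))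
        himage)
  simpa using hneg.neg

theorem hasDerivAt_at_deriv_of_pos (hφC : ContDiff ℝ 2 φ) (hodd : φ.Odd)
    (hφ' : ∀ x : ℝ, 0 < deriv φ x) (hφ'' : ∀ x : ℝ, x ≠ 0 → x * deriv (deriv φ) x < 0)
    (hψ : ∀ y : ℝ, 0 < y → y ≤ deriv φ 0 → 0 ≤ ψ y ∧ deriv φ (ψ y) = y)
    (hψinv : ∀ x : ℝ, 0 ≤ x → ψ (deriv φ x) = x)
    {x : ℝ} (hx : 0 < x) : HasDerivAt ψ (deriv (deriv φ) x)⁻¹ (deriv φ x) := by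
  have hmem : deriv φ x ∈ Ioo 0 (deriv φ 0) := ⟨hφ' x, deriv_lt_deriv_zero hφC hodd hφ'' hx.ne'⟩
  have hφψ : ∀ᶠ y in 𝓝 (deriv φ x), deriv φ (ψ y) = y := by
    filter_upwards [isOpen_Ioo.mem_nhds hmem] with y hy using (hψ y hy.1 hy.2.le).2
  have hd : HasDerivAt (deriv φ) (deriv (deriv φ) x) (ψ (deriv φ x)) := by
    rw [hψinv x hx.le]; exact (hφC.differentiable_deriv_two x).hasDerivAt
  exact hd.of_local_left_inverse
    (continuousAt_of_mem_Ioo_deriv_zero hφC hodd hφ' hφ'' hψ hψinv hmem)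
    (neg_of_mul_neg_right (hφ'' x hx.ne') hx.le).ne hφψ

theorem hasDerivAt_of_mem_Ioo_deriv_zero (hφC : ContDiff ℝ 2 φ) (hodd : φ.Odd)
    (hφ' : ∀ x : ℝ, 0 < deriv φ x) (hφ'' : ∀ x : ℝ, x ≠ 0 → x * deriv (deriv φ) x < 0)
    (hψ : ∀ y : ℝ, 0 < y → y ≤ deriv φ 0 → 0 ≤ ψ y ∧ deriv φ (ψ y) = y)
    (hψinv : ∀ x : ℝ, 0 ≤ x → ψ (deriv φ x) = x)
    {y : ℝ} (hy : y ∈ Ioo 0 (deriv φ 0)) : HasDerivAt ψ (deriv (deriv φ) (ψ y))⁻¹ y := by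
  have h := hasDerivAt_at_deriv_of_pos hφC hodd hφ' hφ'' hψ hψinv (pos_of_mem_Ioo_deriv_zero hψ hy)
  rwa [(hψ y hy.1 hy.2.le).2] at h

theorem deriv_neg_of_mem_Ioo_deriv_zero (hφC : ContDiff ℝ 2 φ) (hodd : φ.Odd)
    (hφ' : ∀ x : ℝ, 0 < deriv φ x) (hφ'' : ∀ x : ℝ, x ≠ 0 → x * deriv (deriv φ) x < 0)
    (hψ : ∀ y : ℝ, 0 < y → y ≤ deriv φ 0 → 0 ≤ ψ y ∧ deriv φ (ψ y) = y)
    (hψinv : ∀ x : ℝ, 0 ≤ x → ψ (deriv φ x) = x)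
    {y : ℝ} (hy : y ∈ Ioo 0 (deriv φ 0)) : deriv ψ y < 0 := by
  have hpos := pos_of_mem_Ioo_deriv_zero hψ hy
  rw [(hasDerivAt_of_mem_Ioo_deriv_zero hφC hodd hφ' hφ'' hψ hψinv hy).deriv, inv_lt_zero]
  exact neg_of_mul_neg_right (hφ'' _ hpos.ne') hpos.le

end Inverse

section Lagrange

variable {ι : Type*} [Fintype ι] [DecidableEq ι] {φ : ℝ → ℝ}

theorem eq_div_mul_of_sum_mul_eq_zero {a l : ι → ℝ} {i : ι} (hi : l i ≠ 0)
    (h : ∀ w : ι → ℝ, ∑ j, l j * w j = 0 → ∑ j, a j * w j = 0) (j : ι) :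
    a j = a i / l i * l j := by
  have key := h (fun m => (if m = i then l j else 0) - if m = j then l i else 0) (by
    simp only [mul_sub, mul_ite, mul_zero, Finset.sum_sub_distrib, Finset.sum_ite_eq',
      Finset.mem_univ, if_true]
    ring)
  simp only [mul_sub, mul_ite, mul_zero, Finset.sum_sub_distrib, Finset.sum_ite_eq',
    Finset.mem_univ, if_true] at key
  field_simp
  linarith

theorem sum_mul_le_two_mul_of_forall_sum_mul_sq_nonpos {c l q d s : ι → ℝ} {i : ι}
    (hc : ∀ j, 0 < c j) (hlq : ∀ j, l j = c j * q j) (hd : ∀ j, 0 < d j)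
    (hs : ∀ j ≠ i, s j * d j = -1) (hsi : s i * d i = 1)
    (h : ∀ w : ι → ℝ, ∑ j, l j * w j = 0 → ∑ j, c j * (s j * w j ^ 2) ≤ 0) :
    ∑ j, l j * q j * d j ≤ 2 * (l i * q i * d i) := by
  set A := ∑ j ∈ Finset.univ.erase i, l j * q j * d j
  have hsplit : ∑ j, l j * q j * d j = l i * q i * d i + A :=
    (Finset.add_sum_erase _ _ (Finset.mem_univ i)).symm
  rw [hsplit]
  suffices A ≤ l i * q i * d i by linarith
  rcases le_or_gt A 0 with hA | hA
  · have hci := hc i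
    have hdi := hd i
    have : l i * q i * d i = c i * q i ^ 2 * d i := by rw [hlq i]; ring
    have : 0 ≤ c i * q i ^ 2 * d i := by positivity
    linarith
  -- off `i` the test vector is the Cauchy–Schwarz optimiser `q j * d j`, up to scaling
  set w : ι → ℝ := fun j => if j = i then -A else l i * q j * d j
  have hwi : w i = -A := if_pos rfl
  have hw : ∀ j ∈ Finset.univ.erase i, w j = l i * q j * d j := fun j hj =>
    if_neg (Finset.ne_of_mem_erase hj)
  have hlw : ∑ j, l j * w j = 0 := by
    rw [← Finset.add_sum_erase _ _ (Finset.mem_univ i), hwi,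
      Finset.sum_congr rfl fun j hj => by rw [hw j hj]]
    rw [show ∑ j ∈ Finset.univ.erase i, l j * (l i * q j * d j) = l i * A by
      rw [Finset.mul_sum]; exact Finset.sum_congr rfl fun _ _ => by ring]
    ring
  have h2 := h w hlw
  rw [← Finset.add_sum_erase _ _ (Finset.mem_univ i), hwi] at h2
  have hrest : ∑ j ∈ Finset.univ.erase i, c j * (s j * w j ^ 2) = -(l i ^ 2 * A) := by
    rw [Finset.mul_sum, ← Finset.sum_neg_distrib]
    refine Finset.sum_congr rfl fun j hj => ?_
    rw [hw j hj, hlq j]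
    linear_combination (c j * l i ^ 2 * q j ^ 2 * d j) * hs j (Finset.ne_of_mem_erase hj)
  rw [hrest] at h2
  have h3 : c i * A * (A - l i * q i * d i) ≤ 0 := by
    linear_combination mul_nonpos_of_nonneg_of_nonpos (hd i).le h2 - (c i * A ^ 2) * hsi
      + (A * d i * l i) * hlq i
  by_contra! hlt
  exact h3.not_gt (mul_pos (mul_pos (hc i) hA) (sub_pos.2 hlt))

theorem deriv_eq_div_mul_of_isLocalMax (hφ : Differentiable ℝ φ) {c l q : ι → ℝ}
    (hc : ∀ j, 0 < c j) (hl : ∀ j, 0 < l j) (hq : ∀ j, q j = l j / c j) {y : ι → ℝ}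
    (hmax : ∀ w : ι → ℝ, ∑ j, l j * w j = 0 → IsLocalMax (fun t => ∑ j, c j * φ (y j + t * w j)) 0)
    (i j : ι) : deriv φ (y j) = deriv φ (y i) / q i * q j := by
  rw [hq, hq]
  have h := eq_div_mul_of_sum_mul_eq_zero (a := fun j => c j * deriv φ (y j)) (hl i).ne'
    (fun w hw => by simpa only [mul_assoc] using (hmax w hw).sum_deriv_mul_eq_zero hφ) j
  have := (hc i).ne'; have := (hc j).ne'; have := (hl i).ne'
  field_simp at h ⊢
  linarith

end Lagrange

theorem Finset.sum_eq_add_add_sum_compl {ι M : Type*} [Fintype ι] [DecidableEq ι]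
    [AddCommMonoid M] (f : ι → M) {i k : ι} (hik : i ≠ k) :
    ∑ j, f j = f i + f k + ∑ j ∈ {i, k}ᶜ, f j := by
  rw [← Finset.sum_add_sum_compl {i, k} f, Finset.sum_pair hik]

theorem sum_mul_abs_sub_two_mul {ι : Type*} [Fintype ι] [DecidableEq ι] {l y : ι → ℝ} {i : ι}
    (hneg : y i ≤ 0) (hpos : ∀ j ≠ i, 0 ≤ y j) :
    ∑ j, l j * |y j| - 2 * (l i * |y i|) = ∑ j, l j * y j := by
  rw [← Finset.add_sum_erase _ _ (Finset.mem_univ i),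
    ← Finset.add_sum_erase _ (fun j => l j * y j) (Finset.mem_univ i),
    Finset.sum_congr rfl fun j hj => by rw [abs_of_nonneg (hpos j (Finset.ne_of_mem_erase hj))],
    abs_of_nonpos hneg]
  ring

theorem deriv_mul_deriv_le {ψ : ℝ → ℝ} {y₀ : ℝ} (hψ' : ∀ y ∈ Ioo 0 y₀, deriv ψ y < 0)
    (hA2 : ∀ p q : ℝ, 0 < q → q < p →
      StrictMonoOn (fun β => deriv ψ (β * p) / deriv ψ (β * q)) (Ioo 0 (y₀ / p)))
    {p q β t : ℝ} (hq : 0 < q) (hqp : q < p) (hβ : 0 < β) (hβt : β ≤ t) (ht : t * p < y₀) :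
    deriv ψ (β * p) * deriv ψ (t * q) ≤ deriv ψ (β * q) * deriv ψ (t * p) := by
  have hp : 0 < p := hq.trans hqp
  have hmem : ∀ s, 0 < s → s ≤ t → s ∈ Ioo 0 (y₀ / p) := fun s hs hst =>
    ⟨hs, (lt_div_iff₀ hp).2 (lt_of_le_of_lt (by nlinarith) ht)⟩
  have hle := (hA2 p q hq hqp).monotoneOn (hmem β hβ hβt) (hmem t (hβ.trans_le hβt) le_rfl) hβt
  have hβq := hψ' (β * q) ⟨by positivity, by nlinarith⟩
  have htq := hψ' (t * q) ⟨by nlinarith, by nlinarith⟩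
  rw [← neg_div_neg_eq, ← neg_div_neg_eq (deriv ψ (t * p)), div_le_div_iff₀ (by linarith)
    (by linarith)] at hle
  linarith

namespace SideOrthant

variable {ι : Type*}

noncomputable def weight (ψ : ℝ → ℝ) (l q : ι → ℝ) (β : ℝ) (j : ι) : ℝ :=
  l j * q j * -deriv ψ (β * q j)

def mass (ψ : ℝ → ℝ) (l q : ι → ℝ) (β : ℝ) (j : ι) : ℝ := l j * ψ (β * q j)

/-- `β` is the Lagrange multiplier of a critical point `x` of `f` on `P` whose only negative
coordinate is `x i`: then `|x j| = ψ (β * q j)`, so `mass` is `l j * |x j|`, `sum_mass_sub` is the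
equation of `P` and `sum_weight_le` is the second-order condition. -/
structure IsCritical [Fintype ι] (ψ : ℝ → ℝ) (y₀ : ℝ) (l q : ι → ℝ) (b : ℝ) (i : ι) (β : ℝ) :
    Prop where
  pos : 0 < β
  mul_lt : ∀ j, β * q j < y₀
  sum_weight_le : ∑ j, weight ψ l q β j ≤ 2 * weight ψ l q β i
  sum_mass_sub : ∑ j, mass ψ l q β j - 2 * mass ψ l q β i = b

section Ratio

variable {ψ : ℝ → ℝ} {y₀ : ℝ} {l q : ι → ℝ}

theorem weight_mul_mass_le (hψpos : ∀ y ∈ Ioo 0 y₀, 0 < ψ y)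
    (hψd : ∀ y ∈ Ioo 0 y₀, DifferentiableAt ℝ ψ y)
    (hA4 : ∀ p q : ℝ, 0 < q → q < p →
      StrictAntiOn (fun β => ψ (β * p) / ψ (β * q)) (Ioo 0 (y₀ / p)))
    (hl : ∀ j, 0 ≤ l j) {i j : ι} (hqi : 0 < q i) (hij : q i < q j) {β : ℝ} (hβ : 0 < β)
    (hβj : β * q j < y₀) :
    weight ψ l q β i * mass ψ l q β j ≤ weight ψ l q β j * mass ψ l q β i := by
  have hqj : 0 < q j := hqi.trans hij
  have hmemj : β * q j ∈ Ioo 0 y₀ := ⟨by positivity, hβj⟩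
  have hmemi : β * q i ∈ Ioo 0 y₀ := ⟨by positivity, by nlinarith⟩
  have hψi := hψpos _ hmemi
  have hratio : HasDerivAt (fun t => ψ (t * q j) / ψ (t * q i))
      ((deriv ψ (β * q j) * q j * ψ (β * q i) - ψ (β * q j) * (deriv ψ (β * q i) * q i)) /
        ψ (β * q i) ^ 2) β :=
    ((hψd _ hmemj).hasDerivAt.comp β ((hasDerivAt_id β).mul_const (q j)) |>.congr_deriv
      (by simp)).div
    ((hψd _ hmemi).hasDerivAt.comp β ((hasDerivAt_id β).mul_const (q i)) |>.congr_deriv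
      (by simp)) hψi.ne'
  have hnonpos := hratio.nonpos_of_antitoneOn
    (isOpen_Ioo.mem_nhds ⟨hβ, (lt_div_iff₀ hqj).2 hβj⟩) (hA4 _ _ hqi hij).antitoneOn
  rw [div_le_iff₀ (by positivity), zero_mul] at hnonpos
  unfold weight mass
  linear_combination mul_nonpos_of_nonneg_of_nonpos (mul_nonneg (hl i) (hl j)) hnonpos

theorem weight_mul_sub_mass_le (hψd : ∀ y ∈ Ioo 0 y₀, DifferentiableAt ℝ ψ y)
    (hψ' : ∀ y ∈ Ioo 0 y₀, deriv ψ y < 0)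
    (hA2 : ∀ p q : ℝ, 0 < q → q < p →
      StrictMonoOn (fun β => deriv ψ (β * p) / deriv ψ (β * q)) (Ioo 0 (y₀ / p)))
    (hl : ∀ j, 0 ≤ l j) {i j : ι} (hqj : 0 < q j) (hji : q j < q i) {β γ : ℝ} (hβ : 0 < β)
    (hβγ : β ≤ γ) (hγ : γ * q i < y₀) :
    weight ψ l q β i * (mass ψ l q β j - mass ψ l q γ j) ≤
      weight ψ l q β j * (mass ψ l q β i - mass ψ l q γ i) := by
  have hqi : 0 < q i := hqj.trans hji
  set θ : ℝ → ℝ := fun t =>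
    q j * -deriv ψ (β * q j) * ψ (t * q i) - q i * -deriv ψ (β * q i) * ψ (t * q j)
  have hmem : ∀ t ∈ Icc β γ, t * q i ∈ Ioo 0 y₀ ∧ t * q j ∈ Ioo 0 y₀ := fun t ht => by
    have : 0 < t := hβ.trans_le ht.1
    exact ⟨⟨by positivity, by nlinarith [ht.2]⟩, ⟨by positivity, by nlinarith [ht.2]⟩⟩
  have hθ : ∀ t ∈ Icc β γ, HasDerivAt θ (q i * q j *
      (deriv ψ (β * q i) * deriv ψ (t * q j) - deriv ψ (β * q j) * deriv ψ (t * q i))) t :=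
    fun t ht =>
    ((((hψd _ (hmem t ht).1).hasDerivAt.comp t ((hasDerivAt_id t).mul_const (q i))).const_mul
      _).sub (((hψd _ (hmem t ht).2).hasDerivAt.comp t
        ((hasDerivAt_id t).mul_const (q j))).const_mul _)).congr_deriv (by simp; ring)
  have hanti : AntitoneOn θ (Icc β γ) := by
    refine antitoneOn_of_deriv_nonpos (convex_Icc β γ)
      (fun t ht => (hθ t ht).continuousAt.continuousWithinAt)
      (fun t ht => (hθ t (interior_subset ht)).differentiableAt.differentiableWithinAt)
      fun t ht => ?_
    rw [interior_Icc] at ht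
    rw [(hθ t (Ioo_subset_Icc_self ht)).deriv]
    exact mul_nonpos_of_nonneg_of_nonpos (by positivity) (sub_nonpos.2
      (deriv_mul_deriv_le hψ' hA2 hqj hji hβ ht.1.le (hmem t (Ioo_subset_Icc_self ht)).1.2))
  have hθβγ := hanti (left_mem_Icc.2 hβγ) (right_mem_Icc.2 hβγ) hβγ
  unfold weight mass
  linear_combination mul_le_mul_of_nonneg_left hθβγ (mul_nonneg (hl i) (hl j))

end Ratio

variable [Fintype ι] [DecidableEq ι] {φ ψ : ℝ → ℝ}

theorem isCritical_of_isLocalMax (hφC : ContDiff ℝ 2 φ) (hodd : φ.Odd)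
    (hφ' : ∀ x : ℝ, 0 < deriv φ x) (hφ'' : ∀ x : ℝ, x ≠ 0 → x * deriv (deriv φ) x < 0)
    (hψ : ∀ y : ℝ, 0 < y → y ≤ deriv φ 0 → 0 ≤ ψ y ∧ deriv φ (ψ y) = y)
    (hψinv : ∀ x : ℝ, 0 ≤ x → ψ (deriv φ x) = x)
    {c l q : ι → ℝ} (hc : ∀ j, 0 < c j) (hl : ∀ j, 0 < l j) (hq : ∀ j, q j = l j / c j) {b : ℝ}
    {y : ι → ℝ} (hb : ∑ j, l j * y j = b)
    (hmax : ∀ w : ι → ℝ, ∑ j, l j * w j = 0 → IsLocalMax (fun t => ∑ j, c j * φ (y j + t * w j)) 0)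
    {i : ι} (hneg : y i < 0) (hpos : ∀ j ≠ i, 0 < y j) :
    ∃ β, IsCritical ψ (deriv φ 0) l q b i β := by
  have hq₀ : ∀ j, 0 < q j := fun j => hq j ▸ div_pos (hl j) (hc j)
  have hy₀ : ∀ j, y j ≠ 0 := fun j => by
    rcases eq_or_ne j i with rfl | hj
    exacts [hneg.ne, (hpos j hj).ne']
  set β := deriv φ (y i) / q i
  have hβq : ∀ j, deriv φ |y j| = β * q j := fun j => by
    rw [hodd.deriv.apply_abs]
    exact deriv_eq_div_mul_of_isLocalMax (hφC.differentiable (by norm_num)) hc hl hq hmax i j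
  have hψβq : ∀ j, ψ (β * q j) = |y j| := fun j => hβq j ▸ hψinv _ (abs_nonneg _)
  have hderiv : ∀ j, deriv ψ (β * q j) = (deriv (deriv φ) |y j|)⁻¹ := fun j =>
    hβq j ▸ (hasDerivAt_at_deriv_of_pos hφC hodd hφ' hφ'' hψ hψinv (abs_pos.2 (hy₀ j))).deriv
  have hφ''abs : ∀ j, deriv (deriv φ) |y j| < 0 := fun j =>
    neg_of_mul_neg_right (hφ'' _ (abs_ne_zero.2 (hy₀ j))) (abs_nonneg _)
  refine ⟨β, div_pos (hφ' _) (hq₀ i), fun j => ?_, ?_, ?_⟩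
  · rw [← hβq]; exact deriv_lt_deriv_zero hφC hodd hφ'' (abs_ne_zero.2 (hy₀ j))
  · refine sum_mul_le_two_mul_of_forall_sum_mul_sq_nonpos (s := fun j => deriv (deriv φ) (y j)) hc
      (fun j => by rw [hq]; field_simp [(hc j).ne']) (fun j => ?_) (fun j hj => ?_) ?_
      (fun w hw => (hmax w hw).sum_deriv_deriv_mul_sq_nonpos hφC)
    · rw [hderiv, neg_pos, inv_lt_zero]; exact hφ''abs j
    · have h := hφ''abs j
      rw [abs_of_pos (hpos j hj)] at h
      rw [hderiv, abs_of_pos (hpos j hj)]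
      field_simp [h.ne]
    · have h := hφ''abs i
      rw [abs_of_neg hneg, hodd.deriv.deriv, neg_neg_iff_pos] at h
      rw [hderiv, abs_of_neg hneg, hodd.deriv.deriv]
      field_simp [h.ne']
  · simp only [mass, hψβq]
    rw [← hb, sum_mul_abs_sub_two_mul hneg.le fun j hj => (hpos j hj).le]

end SideOrthant

namespace SideOrthant.IsCritical

variable {ι : Type*} [Fintype ι] {ψ : ℝ → ℝ} {y₀ : ℝ} {l q : ι → ℝ} {b : ℝ}
  {i k : ι} {β γ : ℝ}

theorem mul_mem_Ioo (h : IsCritical ψ y₀ l q b i β) {j : ι} (hq : 0 < q j) :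
    β * q j ∈ Ioo 0 y₀ :=
  ⟨mul_pos h.pos hq, h.mul_lt j⟩

theorem weight_pos (h : IsCritical ψ y₀ l q b i β) (hψ' : ∀ y ∈ Ioo 0 y₀, deriv ψ y < 0)
    {j : ι} (hl : 0 < l j) (hq : 0 < q j) : 0 < weight ψ l q β j :=
  mul_pos (mul_pos hl hq) (neg_pos.2 (hψ' _ (h.mul_mem_Ioo hq)))

theorem mass_pos (h : IsCritical ψ y₀ l q b i β) (hψpos : ∀ y ∈ Ioo 0 y₀, 0 < ψ y)
    {j : ι} (hl : 0 < l j) (hq : 0 < q j) : 0 < mass ψ l q β j :=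
  mul_pos hl (hψpos _ (h.mul_mem_Ioo hq))

variable [DecidableEq ι]

theorem sum_compl_weight_le (h : IsCritical ψ y₀ l q b i β) (hik : i ≠ k) :
    ∑ j ∈ {i, k}ᶜ, weight ψ l q β j ≤ weight ψ l q β i - weight ψ l q β k := by
  have := h.sum_weight_le
  rw [Finset.sum_eq_add_add_sum_compl _ hik] at this
  linarith

theorem weight_lt (h : IsCritical ψ y₀ l q b i β) (hψ' : ∀ y ∈ Ioo 0 y₀, deriv ψ y < 0)
    (hl : ∀ j, 0 < l j) (hq : ∀ j, 0 < q j) (hik : i ≠ k) {j₀ : ι} (hj₀i : j₀ ≠ i)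
    (hj₀k : j₀ ≠ k) : weight ψ l q β k < weight ψ l q β i := by
  have hpos : 0 < ∑ j ∈ {i, k}ᶜ, weight ψ l q β j :=
    Finset.sum_pos (fun j _ => h.weight_pos hψ' (hl j) (hq j)) ⟨j₀, by simp [hj₀i, hj₀k]⟩
  linarith [h.sum_compl_weight_le hik]

theorem lt (hβ : IsCritical ψ y₀ l q b i β) (hγ : IsCritical ψ y₀ l q b k γ)
    (hψ' : ∀ y ∈ Ioo 0 y₀, deriv ψ y < 0)
    (hA2 : ∀ p q : ℝ, 0 < q → q < p →
      StrictMonoOn (fun β => deriv ψ (β * p) / deriv ψ (β * q)) (Ioo 0 (y₀ / p)))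
    (hl : ∀ j, 0 < l j) (hq : ∀ j, 0 < q j) (hik : q i < q k) {j₀ : ι} (hj₀i : j₀ ≠ i)
    (hj₀k : j₀ ≠ k) : β < γ := by
  by_contra! hγβ
  have hne : i ≠ k := fun h => hik.ne (congrArg q h)
  have hβw := hβ.weight_lt hψ' hl hq hne hj₀i hj₀k
  have hγw := hγ.weight_lt hψ' hl hq hne.symm hj₀k hj₀i
  have hprod := mul_lt_mul'' hβw hγw (hβ.weight_pos hψ' (hl k) (hq k)).le
    (hγ.weight_pos hψ' (hl i) (hq i)).le
  have hA2' := deriv_mul_deriv_le hψ' hA2 (hq i) hik hγ.pos hγβ (hβ.mul_lt k)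
  have hP : 0 ≤ l i * q i * (l k * q k) :=
    (mul_pos (mul_pos (hl i) (hq i)) (mul_pos (hl k) (hq k))).le
  unfold weight at hprod
  linarith [mul_le_mul_of_nonneg_left hA2' hP]

theorem sum_compl_mass_sub_le (hβ : IsCritical ψ y₀ l q b i β) (hγ : IsCritical ψ y₀ l q b k γ)
    (hψpos : ∀ y ∈ Ioo 0 y₀, 0 < ψ y) (hψd : ∀ y ∈ Ioo 0 y₀, DifferentiableAt ℝ ψ y)
    (hψ' : ∀ y ∈ Ioo 0 y₀, deriv ψ y < 0)
    (hA2 : ∀ p q : ℝ, 0 < q → q < p →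
      StrictMonoOn (fun β => deriv ψ (β * p) / deriv ψ (β * q)) (Ioo 0 (y₀ / p)))
    (hA4 : ∀ p q : ℝ, 0 < q → q < p →
      StrictAntiOn (fun β => ψ (β * p) / ψ (β * q)) (Ioo 0 (y₀ / p)))
    (hl : ∀ j, 0 < l j) (hq : ∀ j, 0 < q j) (hqinj : Function.Injective q) (hik : q i < q k)
    (hβγ : β ≤ γ) :
    ∑ j ∈ {i, k}ᶜ, (mass ψ l q β j - mass ψ l q γ j) ≤ mass ψ l q β i - mass ψ l q β k := by
  set w := weight ψ l q β
  have hl' : ∀ j, 0 ≤ l j := fun j => (hl j).le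
  have hwi : 0 < w i := hβ.weight_pos hψ' (hl i) (hq i)
  have hmass : ∀ j ∈ ({i, k}ᶜ : Finset ι),
      w i * (mass ψ l q β j - mass ψ l q γ j) ≤ w j * mass ψ l q β i := fun j hj => by
    have hji : j ≠ i := fun h => by simp [h] at hj
    have hwj : 0 < w j := hβ.weight_pos hψ' (hl j) (hq j)
    rcases (hqinj.ne hji).lt_or_gt with hlt | hgt
    · have := weight_mul_sub_mass_le hψd hψ' hA2 hl' (hq j) hlt hβ.pos hβγ (hγ.mul_lt i)
      nlinarith [hγ.mass_pos hψpos (hl i) (hq i)]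
    · have := weight_mul_mass_le hψpos hψd hA4 hl' (hq i) hgt hβ.pos (hβ.mul_lt j)
      nlinarith [hγ.mass_pos hψpos (hl j) (hq j)]
  have hsum : w i * ∑ j ∈ {i, k}ᶜ, (mass ψ l q β j - mass ψ l q γ j) ≤
      w i * (mass ψ l q β i - mass ψ l q β k) :=
    calc w i * ∑ j ∈ {i, k}ᶜ, (mass ψ l q β j - mass ψ l q γ j)
        ≤ (∑ j ∈ {i, k}ᶜ, w j) * mass ψ l q β i := by
          rw [Finset.mul_sum, Finset.sum_mul]; exact Finset.sum_le_sum hmass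
      _ ≤ (w i - w k) * mass ψ l q β i :=
          mul_le_mul_of_nonneg_right (hβ.sum_compl_weight_le fun h => hik.ne (congrArg q h))
            (hβ.mass_pos hψpos (hl i) (hq i)).le
      _ ≤ w i * (mass ψ l q β i - mass ψ l q β k) := by
          nlinarith [weight_mul_mass_le hψpos hψd hA4 hl' (hq i) hik hβ.pos (hβ.mul_lt k)]
  exact le_of_mul_le_mul_left hsum hwi

theorem mass_lt (hβ : IsCritical ψ y₀ l q b i β) (hγ : IsCritical ψ y₀ l q b k γ)
    (hψpos : ∀ y ∈ Ioo 0 y₀, 0 < ψ y) (hψd : ∀ y ∈ Ioo 0 y₀, DifferentiableAt ℝ ψ y)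
    (hψ' : ∀ y ∈ Ioo 0 y₀, deriv ψ y < 0)
    (hA4 : ∀ p q : ℝ, 0 < q → q < p →
      StrictAntiOn (fun β => ψ (β * p) / ψ (β * q)) (Ioo 0 (y₀ / p)))
    (hl : ∀ j, 0 < l j) (hq : ∀ j, 0 < q j) (hik : q i < q k) {j₀ : ι} (hj₀i : j₀ ≠ i)
    (hj₀k : j₀ ≠ k) (hβγ : β < γ) : mass ψ l q γ k < mass ψ l q γ i := by
  have hne : i ≠ k := fun h => hik.ne (congrArg q h)
  have hmβ : mass ψ l q β k ≤ mass ψ l q β i := by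
    have hwi := hβ.weight_pos hψ' (hl i) (hq i)
    refine le_of_mul_le_mul_left ?_ hwi
    nlinarith [weight_mul_mass_le hψpos hψd hA4 (fun j => (hl j).le) (hq i) hik hβ.pos
      (hβ.mul_lt k), hβ.weight_lt hψ' hl hq hne hj₀i hj₀k, hβ.mass_pos hψpos (hl i) (hq i)]
  have hA4' := hA4 _ _ (hq i) hik ⟨hβ.pos, (lt_div_iff₀ (hq k)).2 (hβ.mul_lt k)⟩
    ⟨hγ.pos, (lt_div_iff₀ (hq k)).2 (hγ.mul_lt k)⟩ hβγ
  rw [div_lt_div_iff₀ (hψpos _ (hγ.mul_mem_Ioo (hq i))) (hψpos _ (hβ.mul_mem_Ioo (hq i)))]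
    at hA4'
  have hmβi := hβ.mass_pos hψpos (hl i) (hq i)
  have hmγi := hγ.mass_pos hψpos (hl i) (hq i)
  refine lt_of_mul_lt_mul_right (a := mass ψ l q β i) ?_ hmβi.le
  calc mass ψ l q γ k * mass ψ l q β i < mass ψ l q β k * mass ψ l q γ i := by
        unfold mass
        nlinarith [mul_lt_mul_of_pos_left hA4' (mul_pos (hl i) (hl k))]
    _ ≤ mass ψ l q γ i * mass ψ l q β i := by nlinarith

theorem not_isCritical (hβ : IsCritical ψ y₀ l q b i β)
    (hψpos : ∀ y ∈ Ioo 0 y₀, 0 < ψ y) (hψd : ∀ y ∈ Ioo 0 y₀, DifferentiableAt ℝ ψ y)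
    (hψ' : ∀ y ∈ Ioo 0 y₀, deriv ψ y < 0)
    (hA2 : ∀ p q : ℝ, 0 < q → q < p →
      StrictMonoOn (fun β => deriv ψ (β * p) / deriv ψ (β * q)) (Ioo 0 (y₀ / p)))
    (hA4 : ∀ p q : ℝ, 0 < q → q < p →
      StrictAntiOn (fun β => ψ (β * p) / ψ (β * q)) (Ioo 0 (y₀ / p)))
    (hl : ∀ j, 0 < l j) (hq : ∀ j, 0 < q j) (hqinj : Function.Injective q) (hik : q i < q k)
    {j₀ : ι} (hj₀i : j₀ ≠ i) (hj₀k : j₀ ≠ k) : ¬ IsCritical ψ y₀ l q b k γ := by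
  intro hγ
  have hne : i ≠ k := fun h => hik.ne (congrArg q h)
  have hβγ := hβ.lt hγ hψ' hA2 hl hq hik hj₀i hj₀k
  have hle := hβ.sum_compl_mass_sub_le hγ hψpos hψd hψ' hA2 hA4 hl hq hqinj hik hβγ.le
  have hlt := hβ.mass_lt hγ hψpos hψd hψ' hA4 hl hq hik hj₀i hj₀k hβγ
  have hβb := hβ.sum_mass_sub
  have hγb := hγ.sum_mass_sub
  rw [Finset.sum_eq_add_add_sum_compl _ hne] at hβb hγb
  rw [Finset.sum_sub_distrib] at hle
  linarith

end SideOrthant.IsCritical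

theorem stmt_18_general (n : ℕ) (hn : 2 ≤ n) (φ ψ : ℝ → ℝ)
    (hφC : ContDiff ℝ 2 φ)
    (hodd : ∀ x : ℝ, φ (-x) = -φ x)
    (hφ' : ∀ x : ℝ, 0 < deriv φ x)
    (hφ'' : ∀ x : ℝ, x ≠ 0 → x * deriv (deriv φ) x < 0)
    (hψ : ∀ y : ℝ, 0 < y → y ≤ deriv φ 0 → 0 ≤ ψ y ∧ deriv φ (ψ y) = y)
    (hψinv : ∀ x : ℝ, 0 ≤ x → ψ (deriv φ x) = x)
    (hA2 : ∀ p q : ℝ, 0 < q → q < p →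
      StrictMonoOn (fun β => deriv ψ (β * p) / deriv ψ (β * q))
        (Set.Ioo 0 (deriv φ 0 / p)))
    (hA4 : ∀ p q : ℝ, 0 < q → q < p →
      StrictAntiOn (fun β => ψ (β * p) / ψ (β * q))
        (Set.Ioo 0 (deriv φ 0 / p)))
    (c l q : Fin (n + 1) → ℝ) (hc : ∀ j, 0 < c j) (hl : ∀ j, 0 < l j)
    (hq : ∀ j, q j = l j / c j) (hqinj : Function.Injective q) (b : ℝ)
    (f : EuclideanSpace ℝ (Fin (n + 1)) → ℝ)
    (hf : ∀ x : EuclideanSpace ℝ (Fin (n + 1)), f x = ∑ i, c i * φ (x i))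
    (P : Set (EuclideanSpace ℝ (Fin (n + 1))))
    (hP : P = {x : EuclideanSpace ℝ (Fin (n + 1)) | ∑ j, l j * x j = b}) :
    ¬ ∃ x₀ x₁ : EuclideanSpace ℝ (Fin (n + 1)),
      x₀ ∈ P ∧ x₁ ∈ P ∧
      (∃ ε > 0, ∀ x ∈ P, ‖x - x₀‖ < ε → f x ≤ f x₀) ∧
      (∃ ε > 0, ∀ x ∈ P, ‖x - x₁‖ < ε → f x ≤ f x₁) ∧
      (x₀ 0 < 0 ∧ ∀ j : Fin (n + 1), j ≠ 0 → 0 < x₀ j) ∧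
      (x₁ 1 < 0 ∧ ∀ j : Fin (n + 1), j ≠ 1 → 0 < x₁ j) := by
  rintro ⟨x₀, x₁, hx₀, hx₁, hmax₀, hmax₁, ⟨hneg₀, hpos₀⟩, ⟨hneg₁, hpos₁⟩⟩
  subst hP
  obtain ⟨β, hβ⟩ := SideOrthant.isCritical_of_isLocalMax hφC hodd hφ' hφ'' hψ hψinv hc hl hq hx₀
    (fun w hw => isLocalMax_sum_comp_line hf hx₀ hmax₀ hw) hneg₀ hpos₀
  obtain ⟨γ, hγ⟩ := SideOrthant.isCritical_of_isLocalMax hφC hodd hφ' hφ'' hψ hψinv hc hl hq hx₁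
    (fun w hw => isLocalMax_sum_comp_line hf hx₁ hmax₁ hw) hneg₁ hpos₁
  have hψpos := fun y (hy : y ∈ Ioo 0 (deriv φ 0)) => pos_of_mem_Ioo_deriv_zero hψ hy
  have hψd := fun y (hy : y ∈ Ioo 0 (deriv φ 0)) =>
    (hasDerivAt_of_mem_Ioo_deriv_zero hφC hodd hφ' hφ'' hψ hψinv hy).differentiableAt
  have hψ' := fun y (hy : y ∈ Ioo 0 (deriv φ 0)) =>
    deriv_neg_of_mem_Ioo_deriv_zero hφC hodd hφ' hφ'' hψ hψinv hy
  have hq₀ : ∀ j, 0 < q j := fun j => hq j ▸ div_pos (hl j) (hc j)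
  have hval₁ : 1 % (n + 1) = 1 := Nat.mod_eq_of_lt (by omega)
  have h01 : (0 : Fin (n + 1)) ≠ 1 := by simp [Fin.ext_iff, hval₁]
  have h20 : (⟨2, by omega⟩ : Fin (n + 1)) ≠ 0 := by simp [Fin.ext_iff]
  have h21 : (⟨2, by omega⟩ : Fin (n + 1)) ≠ 1 := by simp [Fin.ext_iff, hval₁]
  rcases (hqinj.ne h01).lt_or_gt with h | h
  · exact hβ.not_isCritical hψpos hψd hψ' hA2 hA4 hl hq₀ hqinj h h20 h21 hγ
  · exact hγ.not_isCritical hψpos hψd hψ' hA2 hA4 hl hq₀ hqinj h h21 h20 hβ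

/-- Under (A1)–(A4), with `cⱼ > 0`, `lⱼ > 0` and `qⱼ = lⱼ/cⱼ` pairwise
distinct, `f` cannot have local maxima on `P` in two different side orthants: one
point with first coordinate negative and the rest positive, another with second
coordinate negative and the rest positive.  (Dimension is `n + 1 ≥ 3`; indices `0`
and `1` play the roles of the first and second coordinates.) -/
theorem stmt_18 (n : ℕ) (hn : 2 ≤ n) (φ ψ : ℝ → ℝ)
    (hφC : ContDiff ℝ 2 φ)
    (hodd : ∀ x : ℝ, φ (-x) = -φ x)
    (hφ' : ∀ x : ℝ, 0 < deriv φ x)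
    (hφ'' : ∀ x : ℝ, x ≠ 0 → x * deriv (deriv φ) x < 0)
    (hlim : ∃ L : ℝ, Filter.Tendsto φ Filter.atTop (nhds L))
    (hψ : ∀ y : ℝ, 0 < y → y ≤ deriv φ 0 → 0 ≤ ψ y ∧ deriv φ (ψ y) = y)
    (hψinv : ∀ x : ℝ, 0 ≤ x → ψ (deriv φ x) = x)
    (hA2 : ∀ p q : ℝ, 0 < q → q < p →
      StrictMonoOn (fun β => deriv ψ (β * p) / deriv ψ (β * q))
        (Set.Ioo 0 (deriv φ 0 / p)))
    (hA3 : ∀ qj qn ql : ℝ, 0 < qj → qj < qn → qn < ql →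
      StrictMonoOn (fun β => deriv (fun t => deriv ψ (t * qj) / deriv ψ (t * qn)) β /
          deriv (fun t => deriv ψ (t * ql) / deriv ψ (t * qn)) β)
        (Set.Ioo 0 (deriv φ 0 / ql)) ∨
      StrictAntiOn (fun β => deriv (fun t => deriv ψ (t * qj) / deriv ψ (t * qn)) β /
          deriv (fun t => deriv ψ (t * ql) / deriv ψ (t * qn)) β)
        (Set.Ioo 0 (deriv φ 0 / ql)))
    (hA4 : ∀ p q : ℝ, 0 < q → q < p →
      StrictAntiOn (fun β => ψ (β * p) / ψ (β * q))
        (Set.Ioo 0 (deriv φ 0 / p)))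
    (c l q : Fin (n + 1) → ℝ) (hc : ∀ j, 0 < c j) (hl : ∀ j, 0 < l j)
    (hq : ∀ j, q j = l j / c j) (hqinj : Function.Injective q) (b : ℝ)
    (f : EuclideanSpace ℝ (Fin (n + 1)) → ℝ)
    (hf : ∀ x : EuclideanSpace ℝ (Fin (n + 1)), f x = ∑ i, c i * φ (x i))
    (P : Set (EuclideanSpace ℝ (Fin (n + 1))))
    (hP : P = {x : EuclideanSpace ℝ (Fin (n + 1)) | ∑ j, l j * x j = b}) :
    ¬ ∃ x₀ x₁ : EuclideanSpace ℝ (Fin (n + 1)),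
      x₀ ∈ P ∧ x₁ ∈ P ∧
      (∃ ε > 0, ∀ x ∈ P, ‖x - x₀‖ < ε → f x ≤ f x₀) ∧
      (∃ ε > 0, ∀ x ∈ P, ‖x - x₁‖ < ε → f x ≤ f x₁) ∧
      (x₀ 0 < 0 ∧ ∀ j : Fin (n + 1), j ≠ 0 → 0 < x₀ j) ∧
      (x₁ 1 < 0 ∧ ∀ j : Fin (n + 1), j ≠ 1 → 0 < x₁ j) :=
  stmt_18_general n hn φ ψ hφC hodd hφ' hφ'' hψ hψinv hA2 hA4 c l q hc hl hq hqinj b f hf P hP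
end
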